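/- arXiv:2402.03857 — 13 statements merged into one kernel-verified Lean document; each statement's English description precedes it below -/
import Mathlib

section
/- Suppose H : [p₀,0] → ℝ is twice continuously differentiable with H''(p) = γ(p)·H'(p)³ for all p ∈ [p₀,0], H(p₀) = -d, H(0) = 0, and H'(p) > 0 for all p ∈ [p₀,0]. Then the function p ↦ 1/H'(p)² + 2Γ(p) is constant on [p₀,0]; denoting its constant value by θ, one has θ > 2·max_{[p₀,0]} Γ, ∫_{p₀}^0 (θ - 2Γ(s))^{-1/2} ds = d, and H(p) = -∫_p^0 (θ - 2Γ(s))^{-1/2} ds for all p ∈ [p₀,0]. -/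
/-!
Along a solution, `(1 / H'²)' = -2 H'' / H'³ = -2 γ`, so `1 / H'² + 2 Γ` is a first integral,
with value `θ`. Hence `H' = (θ - 2 Γ)^(-1/2)`, which forces `θ > 2 Γ` everywhere, and integrating
`H'` from `p` to `0` gives the formula for `H` and, at `p = p₀`, the equation for `d`.
-/

open Real Set Topology

section FirstIntegral

variable {a b : ℝ} {γ g : ℝ → ℝ}

theorem ContinuousOn.hasDerivWithinAt_integral_Icc (hγ : ContinuousOn γ (Icc a b)) {x : ℝ}
    (hx : x ∈ Icc a b) :
    HasDerivWithinAt (fun p => ∫ t in a..p, γ t) (γ x) (Icc a b) x := by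
  have : Fact (x ∈ Icc a b) := ⟨hx⟩
  have hint : IntervalIntegrable γ MeasureTheory.volume a x :=
    (hγ.mono (Icc_subset_Icc_right hx.2)).intervalIntegrable_of_Icc hx.1
  exact intervalIntegral.integral_hasDerivWithinAt_right hint
    ⟨Icc a b, self_mem_nhdsWithin, hγ.aestronglyMeasurable measurableSet_Icc⟩ (hγ x hx)

theorem HasDerivWithinAt.one_div_sq_of_mul_pow_three {s : Set ℝ} {x c : ℝ}
    (hg : HasDerivWithinAt g (c * g x ^ 3) s x) (hx : g x ≠ 0) :
    HasDerivWithinAt (fun p => 1 / g p ^ 2) (-2 * c) s x := by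
  simp only [one_div]
  refine ((hg.fun_pow 2).inv (pow_ne_zero 2 hx)).congr_deriv ?_
  field_simp
  ring

theorem one_div_sq_add_two_mul_integral_eq (hγ : ContinuousOn γ (Icc a b))
    (hg : ∀ x ∈ Icc a b, HasDerivWithinAt g (γ x * g x ^ 3) (Icc a b) x)
    (hg₀ : ∀ x ∈ Icc a b, g x ≠ 0) :
    ∀ x ∈ Icc a b, 1 / g x ^ 2 + 2 * ∫ t in a..x, γ t = 1 / g a ^ 2 := by
  have hderiv : ∀ x ∈ Icc a b,
      HasDerivWithinAt (fun p => 1 / g p ^ 2 + 2 * ∫ t in a..p, γ t) 0 (Icc a b) x := by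
    intro x hx
    refine (((hg x hx).one_div_sq_of_mul_pow_three (hg₀ x hx)).fun_add
      ((hγ.hasDerivWithinAt_integral_Icc hx).const_mul 2)).congr_deriv ?_
    ring
  intro x hx
  have hconst := constant_of_has_deriv_right_zero
    (fun y hy => (hderiv y hy).continuousWithinAt)
    (fun y hy => (hderiv y (Ico_subset_Icc_self hy)).mono_of_mem_nhdsWithin
      (Icc_mem_nhdsGE_of_mem hy)) x hx
  simpa using hconst

end FirstIntegral

theorem integral_derivWithin_Icc_eq_sub {a b p : ℝ} {f : ℝ → ℝ}
    (hf : ContDiffOn ℝ 1 f (Icc a b)) (hab : a < b) (hp : p ∈ Icc a b) :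
    ∫ t in p..b, derivWithin f (Icc a b) t = f b - f p := by
  have hsub : Icc p b ⊆ Icc a b := Icc_subset_Icc_left hp.1
  apply intervalIntegral.integral_eq_sub_of_hasDeriv_right_of_le hp.2 (hf.continuousOn.mono hsub)
  · intro x hx
    have hnhds : Icc a b ∈ 𝓝 x := Icc_mem_nhds (hp.1.trans_lt hx.1) hx.2
    rw [derivWithin_of_mem_nhds hnhds]
    exact (((hf x (hsub (Ioo_subset_Icc_self hx))).differentiableWithinAt one_ne_zero)
      |>.differentiableAt hnhds).hasDerivAt.hasDerivWithinAt
  · exact ((hf.continuousOn_derivWithin (uniqueDiffOn_Icc hab) le_rfl).mono hsub)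
      |>.intervalIntegrable_of_Icc hp.2

theorem one_div_sq_rpow_neg_one_half {y : ℝ} (hy : 0 < y) : (1 / y ^ 2) ^ (-(1:ℝ)/2) = y := by
  rw [one_div, ← rpow_natCast, ← rpow_neg_one, ← rpow_mul hy.le, ← rpow_mul hy.le]
  norm_num

theorem laminar_solution_necessarily_of_given_form_general
    (p₀ d : ℝ) (hp₀ : p₀ < 0)
    (γ : ℝ → ℝ) (hγ : ContinuousOn γ (Icc p₀ 0))
    (Γ : ℝ → ℝ) (hΓ : ∀ p ∈ Icc p₀ 0, Γ p = ∫ s in p₀..p, γ s)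
    (H : ℝ → ℝ) (hH : ContDiffOn ℝ 2 H (Icc p₀ 0))
    (hode : ∀ p ∈ Icc p₀ 0,
      derivWithin (derivWithin H (Icc p₀ 0)) (Icc p₀ 0) p
        = γ p * (derivWithin H (Icc p₀ 0) p) ^ 3)
    (hHp₀ : H p₀ = -d) (hH0 : H 0 = 0)
    (hH' : ∀ p ∈ Icc p₀ 0, 0 < derivWithin H (Icc p₀ 0) p) :
    ∃ θ : ℝ,
      (∀ p ∈ Icc p₀ 0, 1 / (derivWithin H (Icc p₀ 0) p) ^ 2 + 2 * Γ p = θ) ∧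
      2 * sSup (Γ '' Icc p₀ 0) < θ ∧
      (∫ s in p₀..(0:ℝ), (θ - 2 * Γ s) ^ (-(1:ℝ)/2)) = d ∧
      ∀ p ∈ Icc p₀ 0, H p = -∫ s in p..(0:ℝ), (θ - 2 * Γ s) ^ (-(1:ℝ)/2) := by
  set g := derivWithin H (Icc p₀ 0)
  have hg : ∀ x ∈ Icc p₀ 0, HasDerivWithinAt g (γ x * g x ^ 3) (Icc p₀ 0) x := fun x hx => by
    rw [← hode x hx]
    exact ((hH.derivWithin (uniqueDiffOn_Icc hp₀) (by norm_num)).differentiableOn one_ne_zero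
      x hx).hasDerivWithinAt
  set θ := 1 / g p₀ ^ 2
  have hθ : ∀ p ∈ Icc p₀ 0, 1 / g p ^ 2 + 2 * Γ p = θ := fun p hp => by
    rw [hΓ p hp]
    exact one_div_sq_add_two_mul_integral_eq hγ hg (fun x hx => (hH' x hx).ne') p hp
  have hintegrand : ∀ p ∈ Icc p₀ 0, (θ - 2 * Γ p) ^ (-(1:ℝ)/2) = g p := fun p hp => by
    rw [← hθ p hp, add_sub_cancel_right, one_div_sq_rpow_neg_one_half (hH' p hp)]
  have hH_eq : ∀ p ∈ Icc p₀ 0, ∫ t in p..0, (θ - 2 * Γ t) ^ (-(1:ℝ)/2) = H 0 - H p :=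
    fun p hp => by
      rw [intervalIntegral.integral_congr (g := g) fun t ht =>
        hintegrand t (Icc_subset_Icc_left hp.1 (uIcc_of_le hp.2 ▸ ht))]
      exact integral_derivWithin_Icc_eq_sub (hH.of_le one_le_two) hp₀ hp
  have hΓcont : ContinuousOn Γ (Icc p₀ 0) :=
    ContinuousOn.congr (fun x hx => (hγ.hasDerivWithinAt_integral_Icc hx).continuousWithinAt) hΓ
  refine ⟨θ, hθ, ?_, ?_, fun p hp => ?_⟩
  · obtain ⟨x, hx, hmax⟩ := (isCompact_Icc.image_of_continuousOn hΓcont).sSup_mem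
      ((nonempty_Icc.2 hp₀.le).image Γ)
    have hθx := hθ x hx
    have hpos : 0 < 1 / g x ^ 2 := one_div_pos.2 (pow_pos (hH' x hx) 2)
    linarith
  · rw [hH_eq p₀ (left_mem_Icc.2 hp₀.le), hH0, hHp₀]
    ring
  · rw [hH_eq p hp, hH0]
    ring

/-- Fix p₀ < 0, d > 0, γ continuous on [p₀,0], Γ(p) = ∫_{p₀}^p γ.
If H is C² on [p₀,0] with H'' = γ·H'³, H(p₀) = -d, H(0) = 0, H' > 0, then
1/H'² + 2Γ is constant with value θ, θ > 2 max Γ, ∫_{p₀}^0 (θ-2Γ)^{-1/2} = d,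
and H(p) = -∫_p^0 (θ-2Γ(s))^{-1/2} ds. -/
theorem laminar_solution_necessarily_of_given_form
    (p₀ d : ℝ) (hp₀ : p₀ < 0) (hd : 0 < d)
    (γ : ℝ → ℝ) (hγ : ContinuousOn γ (Icc p₀ 0))
    (Γ : ℝ → ℝ) (hΓ : ∀ p ∈ Icc p₀ 0, Γ p = ∫ s in p₀..p, γ s)
    (H : ℝ → ℝ) (hH : ContDiffOn ℝ 2 H (Icc p₀ 0))
    (hode : ∀ p ∈ Icc p₀ 0,
      derivWithin (derivWithin H (Icc p₀ 0)) (Icc p₀ 0) p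
        = γ p * (derivWithin H (Icc p₀ 0) p) ^ 3)
    (hHp₀ : H p₀ = -d) (hH0 : H 0 = 0)
    (hH' : ∀ p ∈ Icc p₀ 0, 0 < derivWithin H (Icc p₀ 0) p) :
    ∃ θ : ℝ,
      (∀ p ∈ Icc p₀ 0, 1 / (derivWithin H (Icc p₀ 0) p) ^ 2 + 2 * Γ p = θ) ∧
      2 * sSup (Γ '' Icc p₀ 0) < θ ∧
      (∫ s in p₀..(0:ℝ), (θ - 2 * Γ s) ^ (-(1:ℝ)/2)) = d ∧
      ∀ p ∈ Icc p₀ 0, H p = -∫ s in p..(0:ℝ), (θ - 2 * Γ s) ^ (-(1:ℝ)/2) :=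
  laminar_solution_necessarily_of_given_form_general p₀ d hp₀ γ hγ Γ hΓ H hH hode hHp₀ hH0 hH'
end

section
/- Let M := max_{[p₀,0]} Γ and define I(θ) := ∫_{p₀}^0 (θ - 2Γ(s))^{-1/2} ds for θ ∈ (2M,∞). Then I is continuous and strictly decreasing on (2M,∞), I(θ) → 0 as θ → ∞, and for every d > 0 the following holds: there exists θ ∈ (2M,∞) with I(θ) = d if and only if sup_{θ ∈ (2M,∞)} I(θ) > d (the supremum taken in the extended reals [0,∞]); moreover, when it exists, such θ is unique. -/
open Real Set Filter

set_option maxHeartbeats 1000000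

/-- Fix p₀ < 0, γ continuous on [p₀,0], Γ(p) = ∫_{p₀}^p γ, M = max Γ,
I(θ) = ∫_{p₀}^0 (θ-2Γ(s))^(-1/2) ds. Then I is continuous and strictly
decreasing on (2M,∞), I(θ) → 0 as θ → ∞, and for every d > 0 there exists
θ ∈ (2M,∞) with I(θ) = d iff sup_{(2M,∞)} I > d (sup in [0,∞]); such θ is
unique when it exists. -/
theorem existence_of_theta_iff_sup_condition
    (p₀ : ℝ) (hp₀ : p₀ < 0)
    (γ : ℝ → ℝ) (hγ : ContinuousOn γ (Icc p₀ 0))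
    (Γ : ℝ → ℝ) (hΓ : ∀ p ∈ Icc p₀ 0, Γ p = ∫ s in p₀..p, γ s)
    (M : ℝ) (hM : M = sSup (Γ '' Icc p₀ 0))
    (I : ℝ → ℝ)
    (hI : ∀ θ, I θ = ∫ s in p₀..(0:ℝ), (θ - 2 * Γ s) ^ (-(1:ℝ)/2)) :
    ContinuousOn I (Ioi (2 * M)) ∧
    StrictAntiOn I (Ioi (2 * M)) ∧
    Tendsto I atTop (nhds 0) ∧
    ∀ d : ℝ, 0 < d →
      (((∃ θ ∈ Ioi (2 * M), I θ = d) ↔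
          ENNReal.ofReal d < ⨆ θ ∈ Ioi (2 * M), ENNReal.ofReal (I θ)) ∧
        ∀ θ₁ ∈ Ioi (2 * M), ∀ θ₂ ∈ Ioi (2 * M), I θ₁ = d → I θ₂ = d → θ₁ = θ₂) := by
  have hp₀0 : p₀ ≤ 0 := hp₀.le
  have huIcc : uIcc p₀ (0:ℝ) = Icc p₀ 0 := uIcc_of_le hp₀0
  -- the clamp function into [p₀, 0]
  set cl : ℝ → ℝ := fun p => max p₀ (min p 0) with hcl
  have hclmem : ∀ p, cl p ∈ Icc p₀ 0 := fun p =>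
    ⟨le_max_left _ _, max_le (by linarith) (min_le_right _ _)⟩
  have hcleq : ∀ p ∈ Icc p₀ 0, cl p = p := fun p hp => by
    simp only [hcl]
    rw [min_eq_left hp.2, max_eq_right hp.1]
  -- continuous extension of Γ
  set Γ' : ℝ → ℝ := fun p => ∫ s in p₀..(cl p), γ s with hΓ'
  have hγint : MeasureTheory.IntegrableOn γ (uIcc p₀ 0) := by
    rw [huIcc]
    exact hγ.integrableOn_compact isCompact_Icc
  have hprim : ContinuousOn (fun x => ∫ s in p₀..x, γ s) (uIcc p₀ 0) :=
    intervalIntegral.continuousOn_primitive_interval hγint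
  have hclcont : Continuous cl := continuous_const.max (continuous_id.min continuous_const)
  have hΓ'cont : Continuous Γ' := by
    apply hprim.comp_continuous hclcont
    intro x; rw [huIcc]; exact hclmem x
  have hΓΓ' : ∀ p ∈ Icc p₀ 0, Γ p = Γ' p := fun p hp => by
    rw [hΓ p hp]
    simp only [hΓ', hcleq p hp]
  have hΓcont : ContinuousOn Γ (Icc p₀ 0) :=
    hΓ'cont.continuousOn.congr fun p hp => hΓΓ' p hp
  -- Γ s ≤ M on the interval
  have hΓleM : ∀ s ∈ Icc p₀ 0, Γ s ≤ M := by
    intro s hs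
    rw [hM]
    apply le_csSup
    · exact (isCompact_Icc.image_of_continuousOn hΓcont).bddAbove
    · exact mem_image_of_mem _ hs
  have hpos : ∀ {θ}, θ ∈ Ioi (2 * M) → ∀ s ∈ Icc p₀ 0, 0 < θ - 2 * Γ s := by
    intro θ hθ s hs
    have := hΓleM s hs
    have : 2 * Γ s ≤ 2 * M := by linarith
    simp only [mem_Ioi] at hθ; linarith
  have hexpneg : (-(1:ℝ)/2) < 0 := by norm_num
  -- continuity of the integrand in s
  have hintcont : ∀ {θ}, θ ∈ Ioi (2 * M) →
      ContinuousOn (fun s => (θ - 2 * Γ s) ^ (-(1:ℝ)/2)) (Icc p₀ 0) := by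
    intro θ hθ
    apply ContinuousOn.rpow_const (continuousOn_const.sub (continuousOn_const.mul hΓcont))
    intro s hs
    exact Or.inl (hpos hθ s hs).ne'
  have hintint : ∀ {θ}, θ ∈ Ioi (2 * M) →
      IntervalIntegrable (fun s => (θ - 2 * Γ s) ^ (-(1:ℝ)/2)) MeasureTheory.volume p₀ 0 :=
    fun {θ} hθ => (hintcont hθ).intervalIntegrable_of_Icc hp₀0
  -- Continuity of I
  have hIcont : ContinuousOn I (Ioi (2 * M)) := by
    intro θ₀ hθ₀
    apply ContinuousAt.continuousWithinAt
    set c : ℝ := (θ₀ - 2 * M) / 2 with hc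
    have hcpos : 0 < c := by simp only [mem_Ioi] at hθ₀; simp [hc]; linarith
    set J : ℝ → ℝ := fun θ => ∫ s in p₀..(0:ℝ), (max (θ - 2 * Γ' s) c) ^ (-(1:ℝ)/2) with hJ
    have hJcont : Continuous J := by
      apply intervalIntegral.continuous_parametric_intervalIntegral_of_continuous'
      apply Continuous.rpow_const
      · exact (continuous_fst.sub (continuous_const.mul (hΓ'cont.comp continuous_snd))).max
          continuous_const
      · intro x
        exact Or.inl (lt_of_lt_of_le hcpos (le_max_right _ _)).ne'
    have heq : ∀ᶠ θ in nhds θ₀, I θ = J θ := by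
      have hmem : Ioi (2 * M + c) ∈ nhds θ₀ := by
        apply isOpen_Ioi.mem_nhds
        simp only [mem_Ioi] at hθ₀ ⊢
        simp [hc]; linarith
      filter_upwards [hmem] with θ hθ
      rw [hI, hJ]
      apply intervalIntegral.integral_congr
      intro s hs
      rw [huIcc] at hs
      have h1 : Γ s = Γ' s := hΓΓ' s hs
      have h2 : c < θ - 2 * Γ' s := by
        have := hΓleM s hs
        simp only [mem_Ioi] at hθ
        rw [← h1]; linarith
      dsimp only
      rw [h1, max_eq_left h2.le]
    exact hJcont.continuousAt.congr (heq.mono fun θ h => h.symm)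
  -- Strict antitonicity
  have hanti : StrictAntiOn I (Ioi (2 * M)) := by
    intro θ₁ h₁ θ₂ h₂ hlt
    rw [hI θ₁, hI θ₂]
    apply intervalIntegral.integral_lt_integral_of_continuousOn_of_le_of_exists_lt hp₀
      (hintcont h₂) (hintcont h₁)
    · intro x hx
      have hx' : x ∈ Icc p₀ 0 := ⟨hx.1.le, hx.2⟩
      exact (rpow_lt_rpow_of_neg (hpos h₁ x hx') (by linarith) hexpneg).le
    · refine ⟨p₀, ⟨le_refl _, hp₀0⟩, ?_⟩
      exact rpow_lt_rpow_of_neg (hpos h₁ p₀ ⟨le_refl _, hp₀0⟩) (by linarith) hexpneg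
  -- Tendsto 0
  have htend : Tendsto I atTop (nhds 0) := by
    have hub : ∀ᶠ θ in atTop, I θ ≤ (0 - p₀) * (θ - 2 * M) ^ (-(1:ℝ)/2) := by
      filter_upwards [eventually_gt_atTop (2 * M)] with θ hθ
      rw [hI]
      have : (0 - p₀) * (θ - 2 * M) ^ (-(1:ℝ)/2)
          = ∫ _ in p₀..(0:ℝ), (θ - 2 * M) ^ (-(1:ℝ)/2) := by
        rw [intervalIntegral.integral_const, smul_eq_mul]
      rw [this]
      apply intervalIntegral.integral_mono_on hp₀0 (hintint hθ)
        intervalIntegrable_const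
      intro s hs
      have h1 : 0 < θ - 2 * M := by linarith
      have h2 : θ - 2 * M ≤ θ - 2 * Γ s := by have := hΓleM s hs; linarith
      exact rpow_le_rpow_of_nonpos h1 h2 hexpneg.le
    have hlb : ∀ᶠ θ in atTop, 0 ≤ I θ := by
      filter_upwards [eventually_gt_atTop (2 * M)] with θ hθ
      rw [hI]
      apply intervalIntegral.integral_nonneg hp₀0
      intro s hs
      exact rpow_nonneg (hpos hθ s hs).le _
    have hrhs : Tendsto (fun θ => (0 - p₀) * (θ - 2 * M) ^ (-(1:ℝ)/2)) atTop (nhds 0) := by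
      have h1 : Tendsto (fun θ : ℝ => θ - 2 * M) atTop atTop :=
        tendsto_atTop_add_const_right _ _ tendsto_id
      have h2 : Tendsto (fun x : ℝ => x ^ (-(1:ℝ)/2)) atTop (nhds 0) := by
        have := tendsto_rpow_neg_atTop (by norm_num : (0:ℝ) < 1/2)
        convert this using 2 with x
        norm_num
      have := (h2.comp h1).const_mul (0 - p₀)
      simpa using this
    exact tendsto_of_tendsto_of_tendsto_of_le_of_le' tendsto_const_nhds hrhs hlb hub
  refine ⟨hIcont, hanti, htend, fun d hd => ⟨?_, ?_⟩⟩
  · constructor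
    · rintro ⟨θ, hθ, hIθ⟩
      set θ' : ℝ := (2 * M + θ) / 2 with hθ'
      simp only [mem_Ioi] at hθ
      have h1 : θ' ∈ Ioi (2 * M) := by simp only [mem_Ioi, hθ']; linarith
      have h2 : θ' < θ := by simp only [hθ']; linarith
      have h3 : d < I θ' := hIθ ▸ hanti h1 (mem_Ioi.mpr hθ) h2
      calc ENNReal.ofReal d < ENNReal.ofReal (I θ') :=
            (ENNReal.ofReal_lt_ofReal_iff (lt_trans hd h3)).mpr h3
        _ ≤ ⨆ θ ∈ Ioi (2 * M), ENNReal.ofReal (I θ) :=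
            le_biSup (fun θ => ENNReal.ofReal (I θ)) h1
    · intro hlt
      simp only [lt_iSup_iff] at hlt
      obtain ⟨θ₀, hθ₀mem, hθ₀⟩ := hlt
      have hd0 : d < I θ₀ := by
        rwa [ENNReal.ofReal_lt_ofReal_iff_of_nonneg hd.le] at hθ₀
      have hev : ∀ᶠ θ in atTop, I θ < d := htend.eventually (eventually_lt_nhds hd)
      obtain ⟨θ₁, hθ₁⟩ := (hev.and ((eventually_gt_atTop θ₀).and
        (eventually_gt_atTop (2 * M)))).exists
      obtain ⟨hI₁, hθ₀₁, hθ₁M⟩ := hθ₁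
      have hsub : Icc θ₀ θ₁ ⊆ Ioi (2 * M) := fun x hx =>
        lt_of_lt_of_le hθ₀mem hx.1
      have hivt := intermediate_value_Icc' hθ₀₁.le (hIcont.mono hsub)
      have hdmem : d ∈ Icc (I θ₁) (I θ₀) := ⟨hI₁.le, hd0.le⟩
      obtain ⟨θ, hθmem, hθeq⟩ := hivt hdmem
      exact ⟨θ, hsub hθmem, hθeq⟩
  · intro θ₁ h₁ θ₂ h₂ e₁ e₂
    exact hanti.injOn h₁ h₂ (by rw [e₁, e₂])
end

section
/- If H₁, H₂ : [p₀,0] → ℝ are both twice continuously differentiable with H_i''(p) = γ(p)·H_i'(p)³ for all p ∈ [p₀,0], H_i(p₀) = -d, H_i(0) = 0, and H_i'(p) > 0 for all p ∈ [p₀,0] (i = 1,2), then H₁ = H₂. -/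
/-!
Writing `g = H'`, the equation reads `g' = γ g³`, which the substitution `u = g⁻²` linearises to
`u' = -2γ`. Hence `H₁'⁻² - H₂'⁻²` is constant on `[p₀, 0]`. Since `H₁ - H₂` vanishes at both
endpoints, Rolle's theorem gives a point where `H₁' = H₂'`, so the constant is `0`; positivity
then forces `H₁' = H₂'` everywhere, and `H₁ = H₂` because they agree at `p₀`.
-/

open Set

theorem HasDerivWithinAt.inv_sq_of_eq_mul_pow_three {g : ℝ → ℝ} {s : Set ℝ} {c x : ℝ}
    (hg : HasDerivWithinAt g (c * g x ^ 3) s x) (hx : g x ≠ 0) :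
    HasDerivWithinAt (fun y => (g y ^ 2)⁻¹) (-2 * c) s x := by
  refine ((hg.fun_pow 2).fun_inv (pow_ne_zero 2 hx)).congr_deriv ?_
  field_simp
  ring

section CubicODE

variable {a b : ℝ} {γ g₁ g₂ : ℝ → ℝ}

theorem inv_sq_sub_inv_sq_eq_of_hasDerivWithinAt_eq_mul_pow_three
    (hg₁ : ∀ x ∈ Icc a b, HasDerivWithinAt g₁ (γ x * g₁ x ^ 3) (Icc a b) x)
    (hg₂ : ∀ x ∈ Icc a b, HasDerivWithinAt g₂ (γ x * g₂ x ^ 3) (Icc a b) x)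
    (h₁ : ∀ x ∈ Icc a b, g₁ x ≠ 0) (h₂ : ∀ x ∈ Icc a b, g₂ x ≠ 0) :
    ∀ x ∈ Icc a b, (g₁ x ^ 2)⁻¹ - (g₂ x ^ 2)⁻¹ = (g₁ a ^ 2)⁻¹ - (g₂ a ^ 2)⁻¹ := by
  have hψ : ∀ x ∈ Icc a b,
      HasDerivWithinAt (fun y => (g₁ y ^ 2)⁻¹ - (g₂ y ^ 2)⁻¹) 0 (Icc a b) x := fun x hx => by
    simpa using ((hg₁ x hx).inv_sq_of_eq_mul_pow_three (h₁ x hx)).fun_sub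
      ((hg₂ x hx).inv_sq_of_eq_mul_pow_three (h₂ x hx))
  refine constant_of_has_deriv_right_zero (fun x hx => (hψ x hx).continuousWithinAt) ?_
  exact fun x hx =>
    (hψ x (Ico_subset_Icc_self hx)).mono_of_mem_nhdsWithin (Icc_mem_nhdsGE_of_mem hx)

theorem eqOn_of_hasDerivWithinAt_eq_mul_pow_three
    (hg₁ : ∀ x ∈ Icc a b, HasDerivWithinAt g₁ (γ x * g₁ x ^ 3) (Icc a b) x)
    (hg₂ : ∀ x ∈ Icc a b, HasDerivWithinAt g₂ (γ x * g₂ x ^ 3) (Icc a b) x)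
    (h₁ : ∀ x ∈ Icc a b, 0 < g₁ x) (h₂ : ∀ x ∈ Icc a b, 0 < g₂ x)
    {ξ : ℝ} (hξ : ξ ∈ Icc a b) (hξeq : g₁ ξ = g₂ ξ) :
    EqOn g₁ g₂ (Icc a b) := by
  intro x hx
  have hconst := inv_sq_sub_inv_sq_eq_of_hasDerivWithinAt_eq_mul_pow_three hg₁ hg₂
    (fun y hy => (h₁ y hy).ne') (fun y hy => (h₂ y hy).ne')
  have hsq : (g₁ x ^ 2)⁻¹ = (g₂ x ^ 2)⁻¹ := by
    rw [← sub_eq_zero, hconst x hx, ← hconst ξ hξ, hξeq, sub_self]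
  exact (pow_left_inj₀ (h₁ x hx).le (h₂ x hx).le two_ne_zero).mp (inv_injective hsq)

end CubicODE

theorem exists_mem_Ioo_derivWithin_eq {a b : ℝ} (hab : a < b) {H₁ H₂ : ℝ → ℝ}
    (h₁ : DifferentiableOn ℝ H₁ (Icc a b)) (h₂ : DifferentiableOn ℝ H₂ (Icc a b))
    (ha : H₁ a = H₂ a) (hb : H₁ b = H₂ b) :
    ∃ ξ ∈ Ioo a b, derivWithin H₁ (Icc a b) ξ = derivWithin H₂ (Icc a b) ξ := by
  have hderiv : ∀ x ∈ Ioo a b, HasDerivAt (H₁ - H₂)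
      (derivWithin H₁ (Icc a b) x - derivWithin H₂ (Icc a b) x) x := fun x hx =>
    (((h₁ x (Ioo_subset_Icc_self hx)).hasDerivWithinAt.sub
      (h₂ x (Ioo_subset_Icc_self hx)).hasDerivWithinAt).hasDerivAt (Icc_mem_nhds hx.1 hx.2))
  obtain ⟨ξ, hξ, hzero⟩ := exists_hasDerivAt_eq_zero hab (h₁.continuousOn.sub h₂.continuousOn)
    (by simp [ha, hb]) hderiv
  exact ⟨ξ, hξ, sub_eq_zero.mp hzero⟩

theorem ContDiffOn.hasDerivWithinAt_derivWithin_Icc {a b x : ℝ} (hab : a < b) {H : ℝ → ℝ}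
    (hH : ContDiffOn ℝ 2 H (Icc a b)) (hx : x ∈ Icc a b) :
    HasDerivWithinAt (derivWithin H (Icc a b))
      (derivWithin (derivWithin H (Icc a b)) (Icc a b) x) (Icc a b) x :=
  ((hH.derivWithin (m := 1) (uniqueDiffOn_Icc hab) le_rfl).differentiableOn one_ne_zero x
    hx).hasDerivWithinAt

theorem laminar_solution_unique_general
    (p₀ d : ℝ) (hp₀ : p₀ < 0)
    (γ : ℝ → ℝ)
    (H₁ H₂ : ℝ → ℝ)
    (hH₁ : ContDiffOn ℝ 2 H₁ (Icc p₀ 0)) (hH₂ : ContDiffOn ℝ 2 H₂ (Icc p₀ 0))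
    (hode₁ : ∀ p ∈ Icc p₀ 0,
      derivWithin (derivWithin H₁ (Icc p₀ 0)) (Icc p₀ 0) p
        = γ p * (derivWithin H₁ (Icc p₀ 0) p) ^ 3)
    (hode₂ : ∀ p ∈ Icc p₀ 0,
      derivWithin (derivWithin H₂ (Icc p₀ 0)) (Icc p₀ 0) p
        = γ p * (derivWithin H₂ (Icc p₀ 0) p) ^ 3)
    (hbd₁ : H₁ p₀ = -d) (hbd₂ : H₂ p₀ = -d)
    (h0₁ : H₁ 0 = 0) (h0₂ : H₂ 0 = 0)
    (hpos₁ : ∀ p ∈ Icc p₀ 0, 0 < derivWithin H₁ (Icc p₀ 0) p)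
    (hpos₂ : ∀ p ∈ Icc p₀ 0, 0 < derivWithin H₂ (Icc p₀ 0) p) :
    ∀ p ∈ Icc p₀ 0, H₁ p = H₂ p := by
  have hdiff₁ := hH₁.differentiableOn two_ne_zero
  have hdiff₂ := hH₂.differentiableOn two_ne_zero
  have hstart : H₁ p₀ = H₂ p₀ := hbd₁.trans hbd₂.symm
  obtain ⟨ξ, hξ, hξeq⟩ :=
    exists_mem_Ioo_derivWithin_eq hp₀ hdiff₁ hdiff₂ hstart (h0₁.trans h0₂.symm)
  have hderiv := eqOn_of_hasDerivWithinAt_eq_mul_pow_three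
    (fun p hp => hode₁ p hp ▸ hH₁.hasDerivWithinAt_derivWithin_Icc hp₀ hp)
    (fun p hp => hode₂ p hp ▸ hH₂.hasDerivWithinAt_derivWithin_Icc hp₀ hp)
    hpos₁ hpos₂ (Ioo_subset_Icc_self hξ) hξeq
  exact eq_of_derivWithin_eq hdiff₁ hdiff₂ (hderiv.mono Ico_subset_Icc_self) hstart

/-- Fix p₀ < 0, d > 0, γ continuous on [p₀,0].
If H₁, H₂ are both C² solutions on [p₀,0] of H'' = γ·H'³ with H(p₀) = -d,
H(0) = 0 and H' > 0, then H₁ = H₂ on [p₀,0]. -/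
theorem laminar_solution_unique
    (p₀ d : ℝ) (hp₀ : p₀ < 0) (hd : 0 < d)
    (γ : ℝ → ℝ) (hγ : ContinuousOn γ (Icc p₀ 0))
    (H₁ H₂ : ℝ → ℝ)
    (hH₁ : ContDiffOn ℝ 2 H₁ (Icc p₀ 0)) (hH₂ : ContDiffOn ℝ 2 H₂ (Icc p₀ 0))
    (hode₁ : ∀ p ∈ Icc p₀ 0,
      derivWithin (derivWithin H₁ (Icc p₀ 0)) (Icc p₀ 0) p
        = γ p * (derivWithin H₁ (Icc p₀ 0) p) ^ 3)
    (hode₂ : ∀ p ∈ Icc p₀ 0,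
      derivWithin (derivWithin H₂ (Icc p₀ 0)) (Icc p₀ 0) p
        = γ p * (derivWithin H₂ (Icc p₀ 0) p) ^ 3)
    (hbd₁ : H₁ p₀ = -d) (hbd₂ : H₂ p₀ = -d)
    (h0₁ : H₁ 0 = 0) (h0₂ : H₂ 0 = 0)
    (hpos₁ : ∀ p ∈ Icc p₀ 0, 0 < derivWithin H₁ (Icc p₀ 0) p)
    (hpos₂ : ∀ p ∈ Icc p₀ 0, 0 < derivWithin H₂ (Icc p₀ 0) p) :
    ∀ p ∈ Icc p₀ 0, H₁ p = H₂ p :=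
  laminar_solution_unique_general p₀ d hp₀ γ H₁ H₂ hH₁ hH₂ hode₁ hode₂ hbd₁ hbd₂ h0₁ h0₂ hpos₁ hpos₂
end

section
/- If g·d³/p₀² < 1, then there exists a unique λ > 0 such that (g + α·(2π/λ)⁴)·tanh(2πd/λ) = (p₀²/d²)·(2π/λ). -/
/-!
With `u = 2πd/λ`, `B = α/d⁴` and `C = p₀²/d³` the relation becomes
`(g + B u⁴) tanh u = C u`, and the hypothesis reads `g < C`. For `u > 0` this says
`B = C/(u³ tanh u) - g/u⁴`, whose right side falls from `+∞` (like `(C - g)/u⁴`) to `0`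
(like `C/u³`). It falls strictly: its derivative has the sign of
`4g tanh² u - C (3u tanh u + u² sech² u)`, which is negative because `g < C` and
`4 tanh² u ≤ 3u tanh u + u² sech² u`, a consequence of `tanh u + tanh³ u / 3 ≤ u`.
-/

open Real Set

namespace Real

theorem hasDerivAt_tanh (x : ℝ) : HasDerivAt tanh (1 - tanh x ^ 2) x := by
  have h := (hasDerivAt_sinh x).div (hasDerivAt_cosh x) (cosh_pos x).ne'
  rw [show sinh / cosh = tanh from funext fun y => (tanh_eq_sinh_div_cosh y).symm] at h
  refine h.congr_deriv ?_
  rw [tanh_eq_sinh_div_cosh]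
  field_simp

theorem strictMono_tanh : StrictMono tanh :=
  strictMono_of_hasDerivAt_pos hasDerivAt_tanh fun x => sub_pos.2 (tanh_sq_lt_one x)

theorem tanh_pos {x : ℝ} (hx : 0 < x) : 0 < tanh x := by
  simpa using strictMono_tanh hx

theorem tanh_nonneg {x : ℝ} (hx : 0 ≤ x) : 0 ≤ tanh x := by
  simpa using strictMono_tanh.monotone hx

theorem tanh_add_tanh_pow_three_div_three_le {x : ℝ} (hx : 0 ≤ x) :
    tanh x + tanh x ^ 3 / 3 ≤ x := by
  have hmono : Monotone fun y => y - tanh y - tanh y ^ 3 / 3 := by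
    refine monotone_of_hasDerivAt_nonneg (f' := fun y => tanh y ^ 4) (fun y => ?_)
      fun y => by positivity
    refine (((hasDerivAt_id y).sub (hasDerivAt_tanh y)).sub
      (((hasDerivAt_tanh y).pow 3).div_const 3)).congr_deriv ?_
    ring
  simpa [sub_nonneg, sub_sub] using hmono hx

theorem tanh_le_self {x : ℝ} (hx : 0 ≤ x) : tanh x ≤ x := by
  nlinarith [tanh_add_tanh_pow_three_div_three_le hx, pow_nonneg (tanh_nonneg hx) 3]

theorem four_mul_tanh_sq_le {x : ℝ} (hx : 0 ≤ x) :
    4 * tanh x ^ 2 ≤ 3 * x * tanh x + x ^ 2 * (1 - tanh x ^ 2) := by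
  set t := tanh x
  have ht : 0 ≤ t := tanh_nonneg hx
  have ht₁ : 0 ≤ 1 - t ^ 2 := sub_nonneg.2 (tanh_sq_lt_one x).le
  have hxv : t + t ^ 3 / 3 ≤ x := tanh_add_tanh_pow_three_div_three_le hx
  -- the right side minus the left increases with `x ≥ 0` and equals
  -- `t⁴ (1 - t²) (6 + t²) / 9` at `x = t + t³/3`
  nlinarith [mul_nonneg (mul_nonneg (sub_nonneg.2 hxv) (by positivity : 0 ≤ x + t + t ^ 3 / 3))
      ht₁,
    mul_nonneg ht (sub_nonneg.2 hxv),
    mul_nonneg (mul_nonneg (pow_nonneg ht 4) ht₁) (by positivity : (0:ℝ) ≤ 6 + t ^ 2)]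

end Real

noncomputable def dispersionRatio (g C u : ℝ) : ℝ := C / (u ^ 3 * tanh u) - g / u ^ 4

section DispersionRatio

variable {g C B u : ℝ}

theorem dispersionRatio_eq_iff (hu : 0 < u) :
    dispersionRatio g C u = B ↔ (g + B * u ^ 4) * tanh u = C * u := by
  have ht := tanh_pos hu
  have hR : dispersionRatio g C u = (C * u - g * tanh u) / (u ^ 4 * tanh u) := by
    rw [dispersionRatio]
    field_simp
  rw [hR, div_eq_iff (mul_pos (pow_pos hu 4) ht).ne']
  constructor <;> intro h <;> linarith

theorem hasDerivAt_dispersionRatio (hu : 0 < u) :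
    HasDerivAt (dispersionRatio g C)
      ((4 * g * tanh u ^ 2 - C * (3 * u * tanh u + u ^ 2 * (1 - tanh u ^ 2))) /
        (u ^ 5 * tanh u ^ 2)) u := by
  have ht := tanh_pos hu
  have h := ((hasDerivAt_const u C).div ((hasDerivAt_pow 3 u).mul (hasDerivAt_tanh u))
    (mul_pos (pow_pos hu 3) ht).ne').sub
    ((hasDerivAt_const u g).div (hasDerivAt_pow 4 u) (pow_pos hu 4).ne')
  refine h.congr_deriv ?_
  simp only [Pi.mul_apply, Nat.cast_ofNat]
  field_simp
  ring

theorem continuousOn_dispersionRatio : ContinuousOn (dispersionRatio g C) (Ioi 0) :=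
  fun _ hu => (hasDerivAt_dispersionRatio hu).continuousAt.continuousWithinAt

theorem strictAntiOn_dispersionRatio (hg : 0 ≤ g) (hgC : g < C) :
    StrictAntiOn (dispersionRatio g C) (Ioi 0) := by
  refine strictAntiOn_of_hasDerivWithinAt_neg (convex_Ioi 0) continuousOn_dispersionRatio
    (fun u hu => (hasDerivAt_dispersionRatio (interior_subset hu)).hasDerivWithinAt)
    fun u hu => ?_
  replace hu : 0 < u := interior_subset hu
  have ht := tanh_pos hu
  have hkey := four_mul_tanh_sq_le hu.le
  refine div_neg_of_neg_of_pos ?_ (mul_pos (pow_pos hu 5) (pow_pos ht 2))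
  nlinarith [mul_le_mul_of_nonneg_left hkey hg, pow_pos ht 2]

theorem sub_div_pow_four_le_dispersionRatio (hC : 0 ≤ C) (hu : 0 < u) :
    (C - g) / u ^ 4 ≤ dispersionRatio g C u := by
  have ht := tanh_pos hu
  rw [dispersionRatio, sub_div]
  gcongr
  calc u ^ 3 * tanh u ≤ u ^ 3 * u := by gcongr; exact tanh_le_self hu.le
    _ = u ^ 4 := by ring

theorem dispersionRatio_le_div (hg : 0 ≤ g) (hC : 0 ≤ C) (hu : 1 ≤ u) :
    dispersionRatio g C u ≤ C / (u * tanh 1) := by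
  have ht := tanh_pos one_pos
  rw [dispersionRatio]
  calc C / (u ^ 3 * tanh u) - g / u ^ 4 ≤ C / (u ^ 3 * tanh u) :=
        sub_le_self _ (by positivity)
    _ ≤ C / (u * tanh 1) := by
        gcongr
        · exact le_self_pow₀ hu (by norm_num)
        · exact strictMono_tanh.monotone hu

theorem exists_dispersionRatio_eq (hg : 0 ≤ g) (hgC : g < C) (hB : 0 < B) :
    ∃ u, 0 < u ∧ dispersionRatio g C u = B := by
  have ht := tanh_pos one_pos
  have hC : 0 ≤ C := hg.trans hgC.le
  set u₁ := min 1 ((C - g) / B)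
  set u₂ := max 1 (C / (B * tanh 1))
  have hu₁ : 0 < u₁ := lt_min one_pos (div_pos (sub_pos.2 hgC) hB)
  have h₁ : B ≤ dispersionRatio g C u₁ := by
    refine le_trans ?_ (sub_div_pow_four_le_dispersionRatio hC hu₁)
    have hu₁B : B * u₁ ≤ C - g := (le_div_iff₀' hB).1 (min_le_right _ _)
    have hu₁₄ : u₁ ^ 4 ≤ u₁ := pow_le_of_le_one hu₁.le (min_le_left _ _) (by norm_num)
    rw [le_div_iff₀ (by positivity)]
    nlinarith
  have h₂ : dispersionRatio g C u₂ ≤ B := by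
    refine (dispersionRatio_le_div hg hC (le_max_left _ _)).trans ?_
    have hBt : 0 < B * tanh 1 := mul_pos hB ht
    rw [div_le_iff₀ (by positivity)]
    have := (div_le_iff₀' hBt).1 (le_max_right 1 (C / (B * tanh 1)))
    linarith
  obtain ⟨u, hu, hRu⟩ := intermediate_value_Icc' ((min_le_left _ _).trans (le_max_left _ _))
    (continuousOn_dispersionRatio.mono fun v hv => mem_Ioi.2 (hu₁.trans_le hv.1)) ⟨h₂, h₁⟩
  exact ⟨u, hu₁.trans_le hu.1, hRu⟩

theorem existsUnique_pos_add_mul_pow_four_mul_tanh_eq (hg : 0 ≤ g) (hgC : g < C) (hB : 0 < B) :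
    ∃! u, 0 < u ∧ (g + B * u ^ 4) * tanh u = C * u := by
  obtain ⟨u, hu, hRu⟩ := exists_dispersionRatio_eq hg hgC hB
  refine ⟨u, ⟨hu, (dispersionRatio_eq_iff hu).1 hRu⟩, fun v ⟨hv, hv_eq⟩ => ?_⟩
  exact (strictAntiOn_dispersionRatio hg hgC).injOn hv hu
    (((dispersionRatio_eq_iff hv).2 hv_eq).trans hRu.symm)

end DispersionRatio

theorem existsUnique_pos_div {c : ℝ} (hc : 0 < c) {p : ℝ → Prop} (h : ∃! u, 0 < u ∧ p u) :
    ∃! x, 0 < x ∧ p (c / x) := by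
  obtain ⟨u, ⟨hu, hpu⟩, huniq⟩ := h
  refine ⟨c / u, ⟨div_pos hc hu, by rwa [div_div_cancel₀ hc.ne']⟩,
    fun x ⟨hx, hpx⟩ => ?_⟩
  rw [← huniq (c / x) ⟨div_pos hc hx, hpx⟩, div_div_cancel₀ hc.ne']

/-- Dispersion relation for irrotational hydroelastic waves: if g·d³/p₀² < 1
then there is a unique wavelength λ > 0 with
(g + α(2π/λ)⁴)·tanh(2πd/λ) = (p₀²/d²)·(2π/λ). -/
theorem dispersion_relation_unique_wavelength
    (g α d p₀ : ℝ) (hg : 0 < g) (hα : 0 < α) (hd : 0 < d) (hp₀ : p₀ < 0)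
    (hcond : g * d ^ 3 / p₀ ^ 2 < 1) :
    ∃! lam : ℝ, 0 < lam ∧
      (g + α * (2 * π / lam) ^ 4) * Real.tanh (2 * π * d / lam)
        = (p₀ ^ 2 / d ^ 2) * (2 * π / lam) := by
  have hgC : g < p₀ ^ 2 / d ^ 3 := by
    rw [div_lt_one (sq_pos_of_neg hp₀)] at hcond
    rwa [lt_div_iff₀ (by positivity)]
  have h := existsUnique_pos_div (c := 2 * π * d) (by positivity)
    (existsUnique_pos_add_mul_pow_four_mul_tanh_eq hg.le hgC (by positivity : 0 < α / d ^ 4))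
  refine (existsUnique_congr fun lam => and_congr_right fun _ => ?_).1 h
  have hwave : 2 * π / lam = 2 * π * d / lam / d := by field_simp
  rw [hwave]
  constructor <;> intro heq <;> linear_combination heq
end

section
/- If ζ : ℝ → ℝ is four times continuously differentiable and λ-periodic for some λ > 0 (i.e. ζ(x+λ) = ζ(x) for all x ∈ ℝ), then ∫_0^λ H(ζ)(x) dx = 0. -/
open Real

/-- ω(ζ) = (1 + ζ'²)^{1/2}. -/
noncomputable def omg (ζ : ℝ → ℝ) (x : ℝ) : ℝ :=
  Real.sqrt (1 + (deriv ζ x) ^ 2)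

/-- The hydroelastic operator
H(ζ) = ω(ζ)⁻¹·(ω(ζ)⁻¹·(ω(ζ)⁻³·ζ'')')' + (1/2)·(ω(ζ)⁻³·ζ'')³. -/
noncomputable def Hop (ζ : ℝ → ℝ) (x : ℝ) : ℝ :=
  (omg ζ x)⁻¹ *
      deriv (fun y => (omg ζ y)⁻¹ *
        deriv (fun z => ((omg ζ z) ^ 3)⁻¹ * deriv (deriv ζ) z) y) x
    + (1 / 2) * (((omg ζ x) ^ 3)⁻¹ * deriv (deriv ζ) x) ^ 3

/-! Write κ = ω⁻³ζ'' for the curvature of the graph of ζ and κₛ = ω⁻¹κ' for its arc-length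
derivative, so that H(ζ) = ω⁻¹κₛ' + κ³/2. The identities (ω⁻¹)' = -ζ'κ and (ζ'ω⁻¹)' = κ show
that H(ζ) is the derivative of the flux F = ω⁻¹κₛ + (ζ'ω⁻¹)κ²/2, the cross terms ±ζ'ω⁻¹κκ'
cancelling. F is λ-periodic along with ζ, so ∫₀^λ H(ζ) = F(λ) - F(0) = 0. -/

theorem Function.Periodic.deriv {f : ℝ → ℝ} {c : ℝ} (hf : Function.Periodic f c) :
    Function.Periodic (deriv f) c := fun x => by
  rw [← deriv_comp_add_const, show (fun y => f (y + c)) = f from funext hf]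

noncomputable def graphCurvature (ζ : ℝ → ℝ) (x : ℝ) : ℝ :=
  ((omg ζ x) ^ 3)⁻¹ * deriv (deriv ζ) x

noncomputable def arcDerivCurvature (ζ : ℝ → ℝ) (x : ℝ) : ℝ :=
  (omg ζ x)⁻¹ * deriv (graphCurvature ζ) x

noncomputable def hydroelasticFlux (ζ : ℝ → ℝ) (x : ℝ) : ℝ :=
  (omg ζ x)⁻¹ * arcDerivCurvature ζ x
    + 1 / 2 * (deriv ζ x * (omg ζ x)⁻¹) * graphCurvature ζ x ^ 2

theorem Hop_eq (ζ : ℝ → ℝ) (x : ℝ) :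
    Hop ζ x = (omg ζ x)⁻¹ * deriv (arcDerivCurvature ζ) x + 1 / 2 * graphCurvature ζ x ^ 3 :=
  rfl

theorem omg_pos (ζ : ℝ → ℝ) (x : ℝ) : 0 < omg ζ x :=
  Real.sqrt_pos.mpr (by positivity)

theorem omg_sq (ζ : ℝ → ℝ) (x : ℝ) : omg ζ x ^ 2 = 1 + deriv ζ x ^ 2 :=
  Real.sq_sqrt (by positivity)

section Periodic
variable {ζ : ℝ → ℝ} {c : ℝ}

theorem Function.Periodic.omg (h : Function.Periodic ζ c) : Function.Periodic (omg ζ) c :=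
  fun x => by simp only [_root_.omg, h.deriv x]

theorem Function.Periodic.graphCurvature (h : Function.Periodic ζ c) :
    Function.Periodic (graphCurvature ζ) c :=
  fun x => by simp only [_root_.graphCurvature, h.omg x, h.deriv.deriv x]

theorem Function.Periodic.hydroelasticFlux (h : Function.Periodic ζ c) :
    Function.Periodic (hydroelasticFlux ζ) c :=
  fun x => by
    simp only [_root_.hydroelasticFlux, arcDerivCurvature, h.omg x, h.deriv x,
      h.graphCurvature x, h.graphCurvature.deriv x]

end Periodic

section ContDiff
variable {ζ : ℝ → ℝ} {n : WithTop ℕ∞}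

theorem ContDiff.omg (h : ContDiff ℝ (n + 1) ζ) : ContDiff ℝ n (omg ζ) :=
  (contDiff_const.add (h.deriv'.pow 2)).sqrt fun x => by positivity

theorem ContDiff.graphCurvature (h : ContDiff ℝ (n + 1 + 1) ζ) :
    ContDiff ℝ n (graphCurvature ζ) :=
  ((h.omg.of_le le_self_add).pow 3 |>.inv fun x => by have := omg_pos ζ x; positivity).mul
    h.deriv'.deriv'

theorem ContDiff.arcDerivCurvature (h : ContDiff ℝ (n + 1 + 1 + 1) ζ) :
    ContDiff ℝ n (arcDerivCurvature ζ) :=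
  ((h.omg.of_le (le_self_add.trans le_self_add)).inv fun x => (omg_pos ζ x).ne').mul
    h.graphCurvature.deriv'

end ContDiff

section Derivatives
variable {ζ : ℝ → ℝ} {x : ℝ}

theorem hasDerivAt_omg (h : DifferentiableAt ℝ (deriv ζ) x) :
    HasDerivAt (omg ζ) (deriv ζ x * deriv (deriv ζ) x / omg ζ x) x := by
  have := ((h.hasDerivAt.pow 2).const_add 1).sqrt (by positivity : 1 + deriv ζ x ^ 2 ≠ 0)
  refine this.congr_deriv ?_
  rw [show √(1 + (deriv ζ ^ 2) x) = omg ζ x from rfl]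
  have := (omg_pos ζ x).ne'
  field_simp
  ring

theorem hasDerivAt_omg_inv (h : DifferentiableAt ℝ (deriv ζ) x) :
    HasDerivAt (fun y => (omg ζ y)⁻¹) (-(deriv ζ x * graphCurvature ζ x)) x := by
  refine ((hasDerivAt_omg h).inv (omg_pos ζ x).ne').congr_deriv ?_
  have := (omg_pos ζ x).ne'
  simp only [graphCurvature]
  field_simp

theorem hasDerivAt_deriv_mul_omg_inv (h : DifferentiableAt ℝ (deriv ζ) x) :
    HasDerivAt (fun y => deriv ζ y * (omg ζ y)⁻¹) (graphCurvature ζ x) x := by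
  refine (h.hasDerivAt.mul (hasDerivAt_omg_inv h)).congr_deriv ?_
  have := (omg_pos ζ x).ne'
  simp only [graphCurvature]
  field_simp
  linear_combination deriv (deriv ζ) x * omg_sq ζ x

theorem hasDerivAt_hydroelasticFlux (h₁ : DifferentiableAt ℝ (deriv ζ) x)
    (h₂ : DifferentiableAt ℝ (graphCurvature ζ) x)
    (h₃ : DifferentiableAt ℝ (arcDerivCurvature ζ) x) :
    HasDerivAt (hydroelasticFlux ζ) (Hop ζ x) x := by
  have := ((hasDerivAt_omg_inv h₁).mul h₃.hasDerivAt).add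
    (((hasDerivAt_deriv_mul_omg_inv h₁).const_mul (1 / 2)).mul (h₂.hasDerivAt.pow 2))
  refine this.congr_deriv ?_
  simp only [Hop_eq, arcDerivCurvature, Pi.pow_apply]
  ring

end Derivatives

section Integral
variable {ζ : ℝ → ℝ}

theorem continuous_Hop (h : ContDiff ℝ 4 ζ) : Continuous (Hop ζ) := by
  have hω : ContDiff ℝ 3 (omg ζ) := h.omg (n := 3)
  have hκ : ContDiff ℝ 2 (graphCurvature ζ) := h.graphCurvature (n := 2)
  have hκs : ContDiff ℝ 1 (arcDerivCurvature ζ) := h.arcDerivCurvature (n := 1)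
  rw [show Hop ζ = _ from funext (Hop_eq ζ)]
  exact ((hω.continuous.inv₀ fun x => (omg_pos ζ x).ne').mul (hκs.continuous_deriv le_rfl)).add
    (continuous_const.mul (hκ.continuous.pow 3))

theorem integral_Hop_eq_sub (h : ContDiff ℝ 4 ζ) (a b : ℝ) :
    ∫ x in a..b, Hop ζ x = hydroelasticFlux ζ b - hydroelasticFlux ζ a :=
  intervalIntegral.integral_eq_sub_of_hasDerivAt
    (fun x _ => hasDerivAt_hydroelasticFlux
      ((h.deriv' (n := 3)).differentiable (by norm_num) x)
      ((h.graphCurvature (n := 2)).differentiable (by norm_num) x)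
      ((h.arcDerivCurvature (n := 1)).differentiable (by norm_num) x))
    ((continuous_Hop h).intervalIntegrable a b)

end Integral

theorem integral_Hop_eq_zero_general (ζ : ℝ → ℝ) (hζ : ContDiff ℝ 4 ζ)
    (lam : ℝ) (hper : ∀ x : ℝ, ζ (x + lam) = ζ x) :
    (∫ x in (0:ℝ)..lam, Hop ζ x) = 0 := by
  rw [integral_Hop_eq_sub hζ, ← zero_add lam, Function.Periodic.hydroelasticFlux hper 0, sub_self]

/-- If ζ is C⁴ and λ-periodic (λ > 0), then ∫_0^λ H(ζ) dx = 0. -/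
theorem integral_Hop_eq_zero (ζ : ℝ → ℝ) (hζ : ContDiff ℝ 4 ζ)
    (lam : ℝ) (hlam : 0 < lam) (hper : ∀ x : ℝ, ζ (x + lam) = ζ x) :
    (∫ x in (0:ℝ)..lam, Hop ζ x) = 0 :=
  integral_Hop_eq_zero_general ζ hζ lam hper
end

section
/- Let Ω ⊆ ℝ² be open and connected, let u, v, P : Ω → ℝ be continuously differentiable and satisfy the steady Euler equations on Ω, let ψ : Ω → ℝ be differentiable with ∂_x ψ = −v and ∂_y ψ = u on Ω, and let γ : ℝ → ℝ be continuous such that ∂_y u − ∂_x v = γ(−ψ) on Ω. Then the energy E(x,y) := P(x,y) + (u(x,y)² + v(x,y)²)/2 + g·y − ∫_0^{ψ(x,y)} γ(−s) ds is constant on Ω. -/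
/-!
Bernoulli's principle for rotational flows. By the chain rule, `∫₀^ψ γ(−s) ds` contributes
`γ(−ψ) ∇ψ = γ(−ψ) (−v, u)` to `∇E`; eliminating `∇P` with the Euler equations leaves
`∂ₓE = v (∂ₓv − ∂ᵧu + γ(−ψ))` and `∂ᵧE = u (∂ᵧu − ∂ₓv − γ(−ψ))`, which vanish by the vorticity
relation. So `E` has zero derivative on the connected open set `Ω`, hence is constant there.
-/

open Real Set

/-- Partial derivative in the first (horizontal) variable. -/
noncomputable def pdx (f : ℝ × ℝ → ℝ) (z : ℝ × ℝ) : ℝ :=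
  fderiv ℝ f z (1, 0)

/-- Partial derivative in the second (vertical) variable. -/
noncomputable def pdy (f : ℝ × ℝ → ℝ) (z : ℝ × ℝ) : ℝ :=
  fderiv ℝ f z (0, 1)

theorem ContinuousLinearMap.eq_zero_of_apply_one_zero_of_apply_zero_one {R M : Type*}
    [Semiring R] [TopologicalSpace R] [AddCommMonoid M] [TopologicalSpace M] [Module R M]
    {L : R × R →L[R] M} (h₁ : L (1, 0) = 0) (h₂ : L (0, 1) = 0) : L = 0 :=
  prod_ext (ext_ring <| by simpa using h₁) (ext_ring <| by simpa using h₂)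

theorem fderiv_eq_zero_of_pdx_of_pdy {f : ℝ × ℝ → ℝ} {z : ℝ × ℝ}
    (hx : pdx f z = 0) (hy : pdy f z = 0) : fderiv ℝ f z = 0 :=
  ContinuousLinearMap.eq_zero_of_apply_one_zero_of_apply_zero_one hx hy

noncomputable def energy (g : ℝ) (u v P ψ : ℝ × ℝ → ℝ) (γ : ℝ → ℝ) (z : ℝ × ℝ) : ℝ :=
  P z + (u z ^ 2 + v z ^ 2) / 2 + g * z.2 - ∫ s in (0:ℝ)..(ψ z), γ (-s)

section Energy

variable {g : ℝ} {u v P ψ : ℝ × ℝ → ℝ} {γ : ℝ → ℝ} {z : ℝ × ℝ}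

theorem hasFDerivAt_energy (hγ : Continuous γ) (hu : DifferentiableAt ℝ u z)
    (hv : DifferentiableAt ℝ v z) (hP : DifferentiableAt ℝ P z) (hψ : DifferentiableAt ℝ ψ z) :
    HasFDerivAt (energy g u v P ψ γ)
      (fderiv ℝ P z + u z • fderiv ℝ u z + v z • fderiv ℝ v z
        + g • ContinuousLinearMap.snd ℝ ℝ ℝ - γ (-ψ z) • fderiv ℝ ψ z) z := by
  have hkinetic : HasFDerivAt (fun w => (u w ^ 2 + v w ^ 2) / 2)
      (u z • fderiv ℝ u z + v z • fderiv ℝ v z) z := by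
    simp only [div_eq_mul_inv]
    refine (((hu.hasFDerivAt.pow 2).add (hv.hasFDerivAt.pow 2)).mul_const
      (2⁻¹ : ℝ)).congr_fderiv ?_
    match_scalars <;> simp
  have hprimitive : HasFDerivAt (fun w => ∫ s in (0:ℝ)..(ψ w), γ (-s))
      (γ (-ψ z) • fderiv ℝ ψ z) z :=
    ((hγ.comp continuous_neg).integral_hasStrictDerivAt 0 (ψ z)).hasDerivAt.comp_hasFDerivAt z
      hψ.hasFDerivAt
  exact ((hP.hasFDerivAt.add hkinetic).add (hasFDerivAt_snd.const_mul g)).sub hprimitive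
    |>.congr_fderiv (by abel)

theorem pdx_energy (hγ : Continuous γ) (hu : DifferentiableAt ℝ u z)
    (hv : DifferentiableAt ℝ v z) (hP : DifferentiableAt ℝ P z) (hψ : DifferentiableAt ℝ ψ z) :
    pdx (energy g u v P ψ γ) z
      = pdx P z + u z * pdx u z + v z * pdx v z - γ (-ψ z) * pdx ψ z := by
  simp [pdx, (hasFDerivAt_energy hγ hu hv hP hψ).fderiv]

theorem pdy_energy (hγ : Continuous γ) (hu : DifferentiableAt ℝ u z)
    (hv : DifferentiableAt ℝ v z) (hP : DifferentiableAt ℝ P z) (hψ : DifferentiableAt ℝ ψ z) :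
    pdy (energy g u v P ψ γ) z
      = pdy P z + u z * pdy u z + v z * pdy v z + g - γ (-ψ z) * pdy ψ z := by
  simp [pdy, (hasFDerivAt_energy hγ hu hv hP hψ).fderiv]

theorem fderiv_energy_eq_zero (hγ : Continuous γ) (hu : DifferentiableAt ℝ u z)
    (hv : DifferentiableAt ℝ v z) (hP : DifferentiableAt ℝ P z) (hψ : DifferentiableAt ℝ ψ z)
    (hψx : pdx ψ z = -v z) (hψy : pdy ψ z = u z) (hvort : pdy u z - pdx v z = γ (-ψ z))
    (euler₁ : u z * pdx u z + v z * pdy u z = -(pdx P z))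
    (euler₂ : u z * pdx v z + v z * pdy v z = -(pdy P z) - g) :
    fderiv ℝ (energy g u v P ψ γ) z = 0 := by
  refine fderiv_eq_zero_of_pdx_of_pdy ?_ ?_
  · rw [pdx_energy hγ hu hv hP hψ, hψx]
    linear_combination euler₁ - v z * hvort
  · rw [pdy_energy hγ hu hv hP hψ, hψy]
    linear_combination euler₂ + u z * hvort

end Energy

theorem energy_is_constant_general
    (Ω : Set (ℝ × ℝ)) (hΩ : IsOpen Ω) (hconn : IsConnected Ω) (g : ℝ)
    (u v P ψ : ℝ × ℝ → ℝ) (γ : ℝ → ℝ)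
    (hu : ContDiffOn ℝ 1 u Ω) (hv : ContDiffOn ℝ 1 v Ω) (hP : ContDiffOn ℝ 1 P Ω)
    (hψ : DifferentiableOn ℝ ψ Ω)
    (hψx : ∀ z ∈ Ω, pdx ψ z = -v z) (hψy : ∀ z ∈ Ω, pdy ψ z = u z)
    (hγ : Continuous γ)
    (hvort : ∀ z ∈ Ω, pdy u z - pdx v z = γ (-ψ z))
    (euler₁ : ∀ z ∈ Ω, u z * pdx u z + v z * pdy u z = -(pdx P z))
    (euler₂ : ∀ z ∈ Ω, u z * pdx v z + v z * pdy v z = -(pdy P z) - g) :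
    ∀ z ∈ Ω, ∀ w ∈ Ω,
      P z + (u z ^ 2 + v z ^ 2) / 2 + g * z.2 - (∫ s in (0:ℝ)..(ψ z), γ (-s))
        = P w + (u w ^ 2 + v w ^ 2) / 2 + g * w.2 - ∫ s in (0:ℝ)..(ψ w), γ (-s) := by
  have hdiff {f : ℝ × ℝ → ℝ} (hf : DifferentiableOn ℝ f Ω) {z : ℝ × ℝ} (hz : z ∈ Ω) :
      DifferentiableAt ℝ f z :=
    hf.differentiableAt (hΩ.mem_nhds hz)
  have hu' : DifferentiableOn ℝ u Ω := hu.differentiableOn one_ne_zero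
  have hv' : DifferentiableOn ℝ v Ω := hv.differentiableOn one_ne_zero
  have hP' : DifferentiableOn ℝ P Ω := hP.differentiableOn one_ne_zero
  intro z hz w hw
  refine hΩ.is_const_of_fderiv_eq_zero (𝕜 := ℝ) (f := energy g u v P ψ γ) hconn.isPreconnected
    (fun x hx => ?_) (fun x hx => ?_) hz hw
  · exact (hasFDerivAt_energy hγ (hdiff hu' hx) (hdiff hv' hx) (hdiff hP' hx)
      (hdiff hψ hx)).differentiableAt.differentiableWithinAt
  · exact fderiv_energy_eq_zero hγ (hdiff hu' hx) (hdiff hv' hx) (hdiff hP' hx) (hdiff hψ hx)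
      (hψx x hx) (hψy x hx) (hvort x hx) (euler₁ x hx) (euler₂ x hx)

/-- If (u,v,P) is a C¹ solution of the steady Euler equations on an open
connected set Ω, ψ is a stream function (∂_x ψ = -v, ∂_y ψ = u), and the
vorticity satisfies ∂_y u − ∂_x v = γ(−ψ) for a continuous γ, then the energy
E = P + (u² + v²)/2 + g·y − ∫_0^ψ γ(−s) ds is constant on Ω. -/
theorem energy_is_constant
    (Ω : Set (ℝ × ℝ)) (hΩ : IsOpen Ω) (hconn : IsConnected Ω) (g : ℝ)
    (u v P ψ : ℝ × ℝ → ℝ) (γ : ℝ → ℝ)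
    (hu : ContDiffOn ℝ 1 u Ω) (hv : ContDiffOn ℝ 1 v Ω) (hP : ContDiffOn ℝ 1 P Ω)
    (hψ : DifferentiableOn ℝ ψ Ω)
    (hψx : ∀ z ∈ Ω, pdx ψ z = -v z) (hψy : ∀ z ∈ Ω, pdy ψ z = u z)
    (hγ : Continuous γ)
    (hvort : ∀ z ∈ Ω, pdy u z - pdx v z = γ (-ψ z))
    (euler₁ : ∀ z ∈ Ω, u z * pdx u z + v z * pdy u z = -(pdx P z))
    (euler₂ : ∀ z ∈ Ω, u z * pdx v z + v z * pdy v z = -(pdy P z) - g)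
    (incompressible : ∀ z ∈ Ω, pdx u z + pdy v z = 0) :
    ∀ z ∈ Ω, ∀ w ∈ Ω,
      P z + (u z ^ 2 + v z ^ 2) / 2 + g * z.2 - (∫ s in (0:ℝ)..(ψ z), γ (-s))
        = P w + (u w ^ 2 + v w ^ 2) / 2 + g * w.2 - ∫ s in (0:ℝ)..(ψ w), γ (-s) :=
  energy_is_constant_general Ω hΩ hconn g u v P ψ γ hu hv hP hψ hψx hψy hγ hvort euler₁ euler₂
end

section
/- Suppose f₁ : [p₀,0] → ℝ is twice continuously differentiable with λ²·(a³f₁')' = μ·a·f₁ on [p₀,0], f₁(p₀) = 0 and f₁'(p₀) = 1, and f₂ : [p₀,0] → ℝ is twice continuously differentiable with λ²·(a³f₂')' = μ·a·f₂ on [p₀,0], f₂(0) = λ⁴·a(0)³ and f₂'(0) = g·λ⁴ + α·μ². Then (g·λ⁴ + α·μ²)·f₁(0) − λ⁴·a(0)³·f₁'(0) = 0 if and only if there exists c ∈ ℝ with f₂ = c·f₁ on [p₀,0]. -/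
open Real Set

noncomputable def dI (p₀ : ℝ) (f : ℝ → ℝ) : ℝ → ℝ :=
  derivWithin f (Set.Icc p₀ 0)

/-!
Writing the equation as `(P y')' = Q y` with `P = a³` and `Q = μ a / λ²`, the Wronskian
`W = y₁ (P y₂') - y₂ (P y₁')` of two solutions is constant (Abel), and at `0` the boundary
data of `f₂` turn it into `a(0)³` times the given expression. Since `f₁(p₀) = 0` and
`f₁'(p₀) = 1`, `W ≡ 0` forces `f₂(p₀) = 0`, so `f₂ - f₂'(p₀) f₁` solves the equation with zero
Cauchy data at `p₀`; it vanishes by Grönwall's inequality for the first-order system satisfied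
by `(y, P y')`.
-/

theorem eq_zero_of_hasDerivWithinAt_linear_system {A B u v : ℝ → ℝ} {a b : ℝ}
    (hA : ContinuousOn A (Icc a b)) (hB : ContinuousOn B (Icc a b))
    (hu : ContinuousOn u (Icc a b)) (hv : ContinuousOn v (Icc a b))
    (hu' : ∀ x ∈ Ico a b, HasDerivWithinAt u (A x * v x) (Ici x) x)
    (hv' : ∀ x ∈ Ico a b, HasDerivWithinAt v (B x * u x) (Ici x) x)
    (hua : u a = 0) (hva : v a = 0) : ∀ x ∈ Icc a b, u x = 0 := by
  obtain ⟨K₁, hK₁⟩ := isCompact_Icc.exists_bound_of_continuousOn hA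
  obtain ⟨K₂, hK₂⟩ := isCompact_Icc.exists_bound_of_continuousOn hB
  have hbound : ∀ x ∈ Ico a b,
      ‖(A x * v x, B x * u x)‖ ≤ max K₁ K₂ * ‖(u x, v x)‖ := by
    intro x hx
    have hx' : x ∈ Icc a b := Ico_subset_Icc_self hx
    simp only [Prod.norm_def, norm_mul]
    have hK : 0 ≤ max K₁ K₂ := (norm_nonneg _).trans ((hK₁ x hx').trans (le_max_left _ _))
    apply max_le
    · exact mul_le_mul ((hK₁ x hx').trans (le_max_left _ _)) (le_max_right _ _)
        (norm_nonneg _) hK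
    · exact mul_le_mul ((hK₂ x hx').trans (le_max_right _ _)) (le_max_left _ _)
        (norm_nonneg _) hK
  intro x hx
  exact congrArg Prod.fst <| eq_zero_of_abs_deriv_le_mul_abs_self_of_eq_zero_right
    (hu.prodMk hv) (fun t ht => (hu' t ht).prodMk (hv' t ht)) (by simp [hua, hva]) hbound x hx

structure IsSturmLiouvilleSolution (s : Set ℝ) (P Q y : ℝ → ℝ) : Prop where
  differentiableOn : DifferentiableOn ℝ y s
  hasDerivWithinAt_flux :
    ∀ x ∈ s, HasDerivWithinAt (fun t => P t * derivWithin y s t) (Q x * y x) s x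

noncomputable def sturmLiouvilleWronskian (s : Set ℝ) (P y₁ y₂ : ℝ → ℝ) (x : ℝ) : ℝ :=
  y₁ x * (P x * derivWithin y₂ s x) - y₂ x * (P x * derivWithin y₁ s x)

theorem isSturmLiouvilleSolution_of_contDiffOn {s : Set ℝ} {P Q y : ℝ → ℝ}
    (hs : UniqueDiffOn ℝ s) (hP : ContDiffOn ℝ 1 P s) (hy : ContDiffOn ℝ 2 y s)
    (heq : ∀ x ∈ s, derivWithin (fun t => P t * derivWithin y s t) s x = Q x * y x) :
    IsSturmLiouvilleSolution s P Q y where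
  differentiableOn := hy.differentiableOn (by norm_num)
  hasDerivWithinAt_flux x hx := by
    rw [← heq x hx]
    exact ((hP.mul (hy.derivWithin hs (by norm_num))).differentiableOn one_ne_zero x
      hx).hasDerivWithinAt

namespace IsSturmLiouvilleSolution

variable {s : Set ℝ} {P Q y y₁ y₂ : ℝ → ℝ} {a b x : ℝ}

theorem sub_const_mul (h₁ : IsSturmLiouvilleSolution s P Q y₁)
    (h₂ : IsSturmLiouvilleSolution s P Q y₂) (c : ℝ) :
    IsSturmLiouvilleSolution s P Q (fun t => y₂ t - c * y₁ t) where
  differentiableOn := h₂.differentiableOn.sub (h₁.differentiableOn.const_mul c)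
  hasDerivWithinAt_flux x hx := by
    have hflux : ∀ t ∈ s, P t * derivWithin (fun t => y₂ t - c * y₁ t) s t =
        P t * derivWithin y₂ s t - c * (P t * derivWithin y₁ s t) := fun t ht => by
      rw [derivWithin_fun_sub (h₂.differentiableOn t ht)
        ((h₁.differentiableOn t ht).const_mul c),
        derivWithin_const_mul c (h₁.differentiableOn t ht)]
      ring
    exact (((h₂.hasDerivWithinAt_flux x hx).sub
      ((h₁.hasDerivWithinAt_flux x hx).const_mul c)).congr_of_mem hflux hx).congr_deriv
      (by ring)

theorem hasDerivWithinAt_wronskian (h₁ : IsSturmLiouvilleSolution s P Q y₁)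
    (h₂ : IsSturmLiouvilleSolution s P Q y₂) (hx : x ∈ s) :
    HasDerivWithinAt (sturmLiouvilleWronskian s P y₁ y₂) 0 s x :=
  (((h₁.differentiableOn x hx).hasDerivWithinAt.mul (h₂.hasDerivWithinAt_flux x hx)).sub
    ((h₂.differentiableOn x hx).hasDerivWithinAt.mul (h₁.hasDerivWithinAt_flux x hx))).congr_deriv
    (by ring)

theorem wronskian_eq_wronskian_left (h₁ : IsSturmLiouvilleSolution (Icc a b) P Q y₁)
    (h₂ : IsSturmLiouvilleSolution (Icc a b) P Q y₂) (hx : x ∈ Icc a b) :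
    sturmLiouvilleWronskian (Icc a b) P y₁ y₂ x = sturmLiouvilleWronskian (Icc a b) P y₁ y₂ a :=
  constant_of_has_deriv_right_zero
    (HasDerivWithinAt.continuousOn fun _ ht => h₁.hasDerivWithinAt_wronskian h₂ ht)
    (fun _ ht => (h₁.hasDerivWithinAt_wronskian h₂ (Ico_subset_Icc_self ht))
      |>.mono_of_mem_nhdsWithin (Icc_mem_nhdsGE_of_mem ht)) x hx

theorem eq_zero_of_eq_zero_of_derivWithin_eq_zero
    (h : IsSturmLiouvilleSolution (Icc a b) P Q y)
    (hP : ContinuousOn P (Icc a b)) (hP₀ : ∀ x ∈ Icc a b, P x ≠ 0)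
    (hQ : ContinuousOn Q (Icc a b)) (hya : y a = 0) (hy'a : derivWithin y (Icc a b) a = 0) :
    ∀ x ∈ Icc a b, y x = 0 := by
  refine eq_zero_of_hasDerivWithinAt_linear_system (hP.inv₀ hP₀) hQ
    h.differentiableOn.continuousOn (HasDerivWithinAt.continuousOn h.hasDerivWithinAt_flux)
    (fun x hx => ?_) (fun x hx => ?_) hya (by simp [hy'a])
  · rw [Pi.inv_apply, inv_mul_cancel_left₀ (hP₀ x (Ico_subset_Icc_self hx))]
    exact (h.differentiableOn x (Ico_subset_Icc_self hx)).hasDerivWithinAt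
      |>.mono_of_mem_nhdsWithin (Icc_mem_nhdsGE_of_mem hx)
  · exact (h.hasDerivWithinAt_flux x (Ico_subset_Icc_self hx)).mono_of_mem_nhdsWithin
      (Icc_mem_nhdsGE_of_mem hx)

theorem wronskian_eq_zero_iff_exists_eq_const_mul
    (h₁ : IsSturmLiouvilleSolution (Icc a b) P Q y₁)
    (h₂ : IsSturmLiouvilleSolution (Icc a b) P Q y₂)
    (hP : ContinuousOn P (Icc a b)) (hP₀ : ∀ x ∈ Icc a b, P x ≠ 0)
    (hQ : ContinuousOn Q (Icc a b)) (hy₁a : y₁ a = 0)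
    (hy₁'a : derivWithin y₁ (Icc a b) a ≠ 0) (hx : x ∈ Icc a b) :
    sturmLiouvilleWronskian (Icc a b) P y₁ y₂ x = 0 ↔ ∃ c, ∀ t ∈ Icc a b, y₂ t = c * y₁ t := by
  have ha : a ∈ Icc a b := ⟨le_rfl, hx.1.trans hx.2⟩
  rw [h₁.wronskian_eq_wronskian_left h₂ hx, sturmLiouvilleWronskian, hy₁a]
  constructor
  · intro hW
    have hy₂a : y₂ a = 0 := by
      simpa [hP₀ a ha, hy₁'a] using hW
    set c := derivWithin y₂ (Icc a b) a / derivWithin y₁ (Icc a b) a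
    refine ⟨c, fun t ht => sub_eq_zero.mp ?_⟩
    refine (h₁.sub_const_mul h₂ c).eq_zero_of_eq_zero_of_derivWithin_eq_zero hP hP₀ hQ
      (by simp [hy₂a, hy₁a]) ?_ t ht
    rw [derivWithin_fun_sub (h₂.differentiableOn a ha) ((h₁.differentiableOn a ha).const_mul c),
      derivWithin_const_mul _ (h₁.differentiableOn a ha), div_mul_cancel₀ _ hy₁'a, sub_self]
  · rintro ⟨c, hc⟩
    simp [hc a ha, hy₁a]

end IsSturmLiouvilleSolution

theorem wronskian_zero_iff_linearly_dependent_general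
    (p₀ lam μ α g : ℝ) (hp₀ : p₀ < 0) (hlam : 0 < lam)
    (a : ℝ → ℝ) (ha : ContDiffOn ℝ 1 a (Icc p₀ 0))
    (hapos : ∀ p ∈ Icc p₀ 0, 0 < a p)
    (f₁ f₂ : ℝ → ℝ)
    (hf₁ : ContDiffOn ℝ 2 f₁ (Icc p₀ 0)) (hf₂ : ContDiffOn ℝ 2 f₂ (Icc p₀ 0))
    (hf₁e : ∀ p ∈ Icc p₀ 0,
      lam ^ 2 * dI p₀ (fun q => a q ^ 3 * dI p₀ f₁ q) p = μ * a p * f₁ p)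
    (hf₂e : ∀ p ∈ Icc p₀ 0,
      lam ^ 2 * dI p₀ (fun q => a q ^ 3 * dI p₀ f₂ q) p = μ * a p * f₂ p)
    (hf₁0 : f₁ p₀ = 0) (hf₁'0 : dI p₀ f₁ p₀ = 1)
    (hf₂0 : f₂ 0 = lam ^ 4 * a 0 ^ 3)
    (hf₂'0 : dI p₀ f₂ 0 = g * lam ^ 4 + α * μ ^ 2) :
    (g * lam ^ 4 + α * μ ^ 2) * f₁ 0 - lam ^ 4 * a 0 ^ 3 * dI p₀ f₁ 0 = 0 ↔
      ∃ c : ℝ, ∀ p ∈ Icc p₀ 0, f₂ p = c * f₁ p := by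
  have h0 : (0 : ℝ) ∈ Icc p₀ 0 := ⟨hp₀.le, le_rfl⟩
  have hsol : ∀ f : ℝ → ℝ, ContDiffOn ℝ 2 f (Icc p₀ 0) →
      (∀ p ∈ Icc p₀ 0, lam ^ 2 * dI p₀ (fun q => a q ^ 3 * dI p₀ f q) p = μ * a p * f p) →
      IsSturmLiouvilleSolution (Icc p₀ 0) (fun q => a q ^ 3) (fun q => μ * a q / lam ^ 2) f :=
    fun f hf hfe => isSturmLiouvilleSolution_of_contDiffOn (uniqueDiffOn_Icc hp₀) (ha.pow 3) hf
      fun p hp => by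
        rw [div_mul_eq_mul_div, eq_div_iff (by positivity), mul_comm, ← hfe p hp]
        rfl
  have hW : sturmLiouvilleWronskian (Icc p₀ 0) (fun q => a q ^ 3) f₁ f₂ 0 =
      a 0 ^ 3 * ((g * lam ^ 4 + α * μ ^ 2) * f₁ 0 - lam ^ 4 * a 0 ^ 3 * dI p₀ f₁ 0) := by
    rw [sturmLiouvilleWronskian, ← dI, ← dI, hf₂0, hf₂'0]
    ring
  rw [← (hapos 0 h0).ne'.isUnit.pow 3 |>.mul_right_eq_zero, ← hW]
  exact (hsol f₁ hf₁ hf₁e).wronskian_eq_zero_iff_exists_eq_const_mul (hsol f₂ hf₂ hf₂e)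
    (ha.continuousOn.pow 3) (fun p hp => (pow_pos (hapos p hp) 3).ne')
    ((continuousOn_const.mul ha.continuousOn).div_const _) hf₁0
    (by rw [← dI, hf₁'0]; exact one_ne_zero) h0

/-- Let f₁ solve λ²·(a³f₁')' = μ·a·f₁ with f₁(p₀) = 0, f₁'(p₀) = 1,
and f₂ solve the same equation with f₂(0) = λ⁴·a(0)³,
f₂'(0) = g·λ⁴ + α·μ². Then the Wronskian-at-0 condition
(g·λ⁴ + α·μ²)·f₁(0) − λ⁴·a(0)³·f₁'(0) = 0 holds iff f₂ is a scalar
multiple of f₁ on [p₀,0]. -/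
theorem wronskian_zero_iff_linearly_dependent
    (p₀ lam μ α g : ℝ) (hp₀ : p₀ < 0) (hlam : 0 < lam) (hμ : 0 < μ)
    (hα : 0 < α) (hg : 0 < g)
    (a : ℝ → ℝ) (ha : ContDiffOn ℝ 1 a (Icc p₀ 0))
    (hapos : ∀ p ∈ Icc p₀ 0, 0 < a p)
    (f₁ f₂ : ℝ → ℝ)
    (hf₁ : ContDiffOn ℝ 2 f₁ (Icc p₀ 0)) (hf₂ : ContDiffOn ℝ 2 f₂ (Icc p₀ 0))
    (hf₁e : ∀ p ∈ Icc p₀ 0,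
      lam ^ 2 * dI p₀ (fun q => a q ^ 3 * dI p₀ f₁ q) p = μ * a p * f₁ p)
    (hf₂e : ∀ p ∈ Icc p₀ 0,
      lam ^ 2 * dI p₀ (fun q => a q ^ 3 * dI p₀ f₂ q) p = μ * a p * f₂ p)
    (hf₁0 : f₁ p₀ = 0) (hf₁'0 : dI p₀ f₁ p₀ = 1)
    (hf₂0 : f₂ 0 = lam ^ 4 * a 0 ^ 3)
    (hf₂'0 : dI p₀ f₂ 0 = g * lam ^ 4 + α * μ ^ 2) :
    (g * lam ^ 4 + α * μ ^ 2) * f₁ 0 - lam ^ 4 * a 0 ^ 3 * dI p₀ f₁ 0 = 0 ↔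
      ∃ c : ℝ, ∀ p ∈ Icc p₀ 0, f₂ p = c * f₁ p :=
  wronskian_zero_iff_linearly_dependent_general p₀ lam μ α g hp₀ hlam a ha hapos f₁ f₂ hf₁ hf₂ hf₁e
    hf₂e hf₁0 hf₁'0 hf₂0 hf₂'0
end

section
/- Let m := min_{[p₀,0]} a and M := max_{[p₀,0]} a. If f : [p₀,0] → ℝ is twice continuously differentiable with λ²·(a³f')' = μ·a·f on [p₀,0], f(p₀) = 0 and f'(p₀) = 1, then f'(p) ≥ (m/M)³ for all p ∈ [p₀,0]; in particular f is strictly increasing on [p₀,0], f(p) > 0 for all p ∈ (p₀,0], and f(0) ≥ |p₀|·(m/M)³. -/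
open Real Set

/-!
The flux `g = a³ f'` satisfies `λ² g' = μ a f`, so `g` cannot decrease as long as `f ≥ 0`, and
`f ≥ 0` as long as `f' ≥ 0`. Starting from `g(p₀) = a(p₀)³ > 0`, a first-exit argument shows
that `f'` never vanishes and `g` is nondecreasing on the whole interval; hence
`m³ ≤ g = a³ f' ≤ M³ f'`. Integrating `f' ≥ (m/M)³` gives the remaining claims.
-/

theorem ContinuousOn.pos_Icc_of_pos_Ico {g : ℝ → ℝ} {a b : ℝ} (hg : ContinuousOn g (Icc a b))
    (hstep : ∀ q ∈ Icc a b, (∀ p ∈ Ico a q, 0 < g p) → 0 < g q) :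
    ∀ q ∈ Icc a b, 0 < g q := by
  by_contra! ⟨q, hq, hgq⟩
  have hZ : IsCompact (Icc a b ∩ g ⁻¹' Iic 0) :=
    isCompact_Icc.of_isClosed_subset
      (hg.preimage_isClosed_of_isClosed isClosed_Icc isClosed_Iic) inter_subset_left
  obtain ⟨q₀, ⟨hq₀, hgq₀⟩, hleast⟩ := hZ.exists_isLeast ⟨q, hq, hgq⟩
  refine (hstep q₀ hq₀ fun p hp => ?_).not_ge hgq₀
  by_contra! hgp
  exact (hleast ⟨⟨hp.1, hp.2.le.trans hq₀.2⟩, hgp⟩).not_gt hp.2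

theorem monotoneOn_Icc_of_hasDerivWithinAt_nonneg {s : Set ℝ} {f f' : ℝ → ℝ} {a b : ℝ}
    (hab : Icc a b ⊆ s) (hf : ∀ x ∈ Icc a b, HasDerivWithinAt f (f' x) s x)
    (hf' : ∀ x ∈ Ioo a b, 0 ≤ f' x) : MonotoneOn f (Icc a b) := by
  refine monotoneOn_of_hasDerivWithinAt_nonneg (convex_Icc a b)
    (fun x hx => ((hf x hx).continuousWithinAt).mono hab) ?_ (by rwa [interior_Icc])
  rw [interior_Icc]
  exact fun x hx => (hf x (Ioo_subset_Icc_self hx)).mono (Ioo_subset_Icc_self.trans hab)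

theorem monotoneOn_flux {f f' w G' : ℝ → ℝ} {a b : ℝ}
    (hf : ∀ x ∈ Icc a b, HasDerivWithinAt f (f' x) (Icc a b) x)
    (hf'c : ContinuousOn f' (Icc a b))
    (hG : ∀ x ∈ Icc a b, HasDerivWithinAt (fun y => w y * f' y) (G' x) (Icc a b) x)
    (hG' : ∀ x ∈ Ioo a b, 0 ≤ f x → 0 ≤ G' x)
    (hw : ∀ x ∈ Icc a b, 0 < w x) (hfa : f a = 0) (hf'a : 0 < f' a) :
    MonotoneOn (fun x => w x * f' x) (Icc a b) := by
  have key : ∀ q ∈ Icc a b, (∀ p ∈ Ico a q, 0 < f' p) →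
      MonotoneOn (fun x => w x * f' x) (Icc a q) := by
    intro q hq hpos
    have hsub : Icc a q ⊆ Icc a b := Icc_subset_Icc_right hq.2
    have hfmono : MonotoneOn f (Icc a q) :=
      monotoneOn_Icc_of_hasDerivWithinAt_nonneg hsub (fun x hx => hf x (hsub hx))
        fun x hx => (hpos x (Ioo_subset_Ico_self hx)).le
    refine monotoneOn_Icc_of_hasDerivWithinAt_nonneg hsub (fun x hx => hG x (hsub hx))
      fun x hx => hG' x (Ioo_subset_Ioo_right hq.2 hx) ?_
    exact hfa ▸ hfmono (left_mem_Icc.2 hq.1) (Ioo_subset_Icc_self hx) hx.1.le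
  have hpos : ∀ q ∈ Icc a b, 0 < f' q := hf'c.pos_Icc_of_pos_Ico fun q hq hpos => by
    have hflux := key q hq hpos (left_mem_Icc.2 hq.1) (right_mem_Icc.2 hq.1) hq.1
    exact pos_of_mul_pos_right ((mul_pos (hw a ⟨le_rfl, hq.1.trans hq.2⟩) hf'a).trans_le hflux)
      (hw q hq).le
  exact fun x hx y hy =>
    key b ⟨hx.1.trans hx.2, le_rfl⟩ (fun p hp => hpos p (Ico_subset_Icc_self hp)) hx hy

theorem dI_flux_monotoneOn {p₀ lam μ : ℝ} {a f : ℝ → ℝ} (hp₀ : p₀ < 0) (hlam : lam ≠ 0)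
    (hμ : 0 ≤ μ) (ha : ContDiffOn ℝ 1 a (Icc p₀ 0)) (hapos : ∀ p ∈ Icc p₀ 0, 0 < a p)
    (hf : ContDiffOn ℝ 2 f (Icc p₀ 0))
    (hfe : ∀ p ∈ Icc p₀ 0,
      lam ^ 2 * dI p₀ (fun q => a q ^ 3 * dI p₀ f q) p = μ * a p * f p)
    (hf0 : f p₀ = 0) (hf'0 : 0 < dI p₀ f p₀) :
    MonotoneOn (fun q => a q ^ 3 * dI p₀ f q) (Icc p₀ 0) := by
  have hUD : UniqueDiffOn ℝ (Icc p₀ 0) := uniqueDiffOn_Icc hp₀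
  have hflux : ContDiffOn ℝ 1 (fun q => a q ^ 3 * dI p₀ f q) (Icc p₀ 0) :=
    (ha.pow 3).mul (hf.derivWithin hUD (by norm_num))
  refine monotoneOn_flux (fun x hx => ((hf.differentiableOn (by norm_num)) x hx).hasDerivWithinAt)
    (hf.continuousOn_derivWithin hUD (by norm_num))
    (fun x hx => (hflux.differentiableOn one_ne_zero x hx).hasDerivWithinAt)
    (fun x hx hfx => ?_) (fun x hx => pow_pos (hapos x hx) 3) hf0 hf'0
  have hx' : x ∈ Icc p₀ 0 := Ioo_subset_Icc_self hx
  refine (mul_nonneg_iff_of_pos_left (by positivity : 0 < lam ^ 2)).1 ?_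
  rw [dI] at hfe
  rw [hfe x hx']
  exact mul_nonneg (mul_nonneg hμ (hapos x hx').le) hfx

theorem IsCompact.sInf_image_pos {K : Set ℝ} {a : ℝ → ℝ} (hK : IsCompact K) (hne : K.Nonempty)
    (ha : ContinuousOn a K) (hpos : ∀ x ∈ K, 0 < a x) : 0 < sInf (a '' K) := by
  obtain ⟨x, hx, hxa⟩ := (hK.image_of_continuousOn ha).sInf_mem (hne.image a)
  exact hxa ▸ hpos x hx

theorem div_pow_le_of_pow_le_pow_mul {m A M d : ℝ} (n : ℕ) (hm : 0 ≤ m) (hA : 0 < A)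
    (hAM : A ≤ M) (h : m ^ n ≤ A ^ n * d) : (m / M) ^ n ≤ d := by
  have hd : 0 ≤ d := (mul_nonneg_iff_of_pos_left (pow_pos hA n)).1 ((pow_nonneg hm n).trans h)
  have hM : 0 < M ^ n := pow_pos (hA.trans_le hAM) n
  calc (m / M) ^ n = m ^ n / M ^ n := div_pow m M n
    _ ≤ A ^ n * d / M ^ n := by gcongr
    _ ≤ M ^ n * d / M ^ n := by gcongr
    _ = d := by field_simp

theorem monotoneOn_sub_mul_of_le_derivWithin {f : ℝ → ℝ} {a b c : ℝ}
    (hf : DifferentiableOn ℝ f (Icc a b)) (hc : ∀ x ∈ Ioo a b, c ≤ derivWithin f (Icc a b) x) :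
    MonotoneOn (fun x => f x - c * x) (Icc a b) :=
  monotoneOn_Icc_of_hasDerivWithinAt_nonneg subset_rfl
    (fun x hx => (hf x hx).hasDerivWithinAt.sub ((hasDerivWithinAt_id x _).const_mul c))
    (fun x hx => by simpa using hc x hx)

theorem StrictMonoOn.of_monotoneOn_sub_mul {s : Set ℝ} {f : ℝ → ℝ} {c : ℝ} (hc : 0 < c)
    (h : MonotoneOn (fun x => f x - c * x) s) : StrictMonoOn f s := fun x hx y hy hxy => by
  nlinarith [h hx hy hxy.le, mul_pos hc (sub_pos.2 hxy)]

/-- Let m = min a, M = max a on [p₀,0]. If f solves λ²·(a³f')' = μ·a·f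
(μ > 0) with f(p₀) = 0 and f'(p₀) = 1, then f' ≥ (m/M)³ on [p₀,0]; in
particular f is strictly increasing, f > 0 on (p₀,0], and
f(0) ≥ |p₀|·(m/M)³. -/
theorem fundamental_solution_increasing
    (p₀ lam μ : ℝ) (hp₀ : p₀ < 0) (hlam : 0 < lam) (hμ : 0 < μ)
    (a : ℝ → ℝ) (ha : ContDiffOn ℝ 1 a (Icc p₀ 0))
    (hapos : ∀ p ∈ Icc p₀ 0, 0 < a p)
    (m M : ℝ) (hm : m = sInf (a '' Icc p₀ 0)) (hM : M = sSup (a '' Icc p₀ 0))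
    (f : ℝ → ℝ) (hf : ContDiffOn ℝ 2 f (Icc p₀ 0))
    (hfe : ∀ p ∈ Icc p₀ 0,
      lam ^ 2 * dI p₀ (fun q => a q ^ 3 * dI p₀ f q) p = μ * a p * f p)
    (hf0 : f p₀ = 0) (hf'0 : dI p₀ f p₀ = 1) :
    (∀ p ∈ Icc p₀ 0, (m / M) ^ 3 ≤ dI p₀ f p) ∧
    StrictMonoOn f (Icc p₀ 0) ∧
    (∀ p ∈ Ioc p₀ 0, 0 < f p) ∧
    |p₀| * (m / M) ^ 3 ≤ f 0 := by
  have hp₀mem : p₀ ∈ Icc p₀ 0 := left_mem_Icc.2 hp₀.le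
  have h0mem : (0 : ℝ) ∈ Icc p₀ 0 := right_mem_Icc.2 hp₀.le
  have haK : IsCompact (a '' Icc p₀ 0) := isCompact_Icc.image_of_continuousOn ha.continuousOn
  have hmpos : 0 < m := hm ▸ isCompact_Icc.sInf_image_pos ⟨0, h0mem⟩ ha.continuousOn hapos
  have hmle : ∀ p ∈ Icc p₀ 0, m ≤ a p := fun p hp =>
    hm ▸ csInf_le haK.bddBelow (mem_image_of_mem a hp)
  have hleM : ∀ p ∈ Icc p₀ 0, a p ≤ M := fun p hp =>
    hM ▸ le_csSup haK.bddAbove (mem_image_of_mem a hp)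
  have hMpos : 0 < M := hmpos.trans_le ((hmle 0 h0mem).trans (hleM 0 h0mem))
  have hmono := dI_flux_monotoneOn hp₀ hlam.ne' hμ.le ha hapos hf hfe hf0 (hf'0 ▸ one_pos)
  have hlow : ∀ p ∈ Icc p₀ 0, (m / M) ^ 3 ≤ dI p₀ f p := fun p hp =>
    div_pow_le_of_pow_le_pow_mul 3 hmpos.le (hapos p hp) (hleM p hp)
      (calc m ^ 3 ≤ a p₀ ^ 3 := pow_le_pow_left₀ hmpos.le (hmle p₀ hp₀mem) 3
        _ = a p₀ ^ 3 * dI p₀ f p₀ := by rw [hf'0, mul_one]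
        _ ≤ a p ^ 3 * dI p₀ f p := hmono hp₀mem hp hp.1)
  have hgrowth := monotoneOn_sub_mul_of_le_derivWithin (hf.differentiableOn (by norm_num))
    fun x hx => hlow x (Ioo_subset_Icc_self hx)
  have hstrict := StrictMonoOn.of_monotoneOn_sub_mul (pow_pos (div_pos hmpos hMpos) 3) hgrowth
  refine ⟨hlow, hstrict, fun p hp => hf0 ▸ hstrict hp₀mem (Ioc_subset_Icc_self hp) hp.1, ?_⟩
  have := hgrowth hp₀mem h0mem hp₀.le
  rw [abs_of_neg hp₀]
  linarith
end

section
/- For each μ > 0 let f_μ : [p₀,0] → ℝ be a twice continuously differentiable function satisfying λ²·(a³f_μ')' = μ·a·f_μ on [p₀,0], f_μ(p₀) = 0 and f_μ'(p₀) = 1. Then W(μ) := (g·λ⁴ + α·μ²)·f_μ(0) − λ⁴·a(0)³·f_μ'(0) tends to +∞ as μ → ∞. -/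
/-!
Write `G = a³ F'`, so that `F' = G / a³` and `G' = (μ a / λ²) F`. For this cooperative system
with `F(p₀) = 0 < G(p₀)`, both `F G` and `G²` are nondecreasing, so `G` never vanishes and stays
positive; then `F` and `G` are nondecreasing as well. Hence `F(0)` is bounded below by a positive
constant independent of `μ`, while `G(0) ≤ G(p₀) + O(μ) F(0)`, so the term `α μ² F(0)` of `W(μ)`
dominates.
-/

open Real Set Filter

/-- First-order form of `(k F')' = r F` with `G = k F'` and `u = 1 / k`. -/
structure IsCooperativeSolution (x₀ x₁ : ℝ) (u r F G : ℝ → ℝ) : Prop where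
  continuousOn_fst : ContinuousOn F (Icc x₀ x₁)
  continuousOn_snd : ContinuousOn G (Icc x₀ x₁)
  hasDerivAt_fst : ∀ x ∈ Ioo x₀ x₁, HasDerivAt F (u x * G x) x
  hasDerivAt_snd : ∀ x ∈ Ioo x₀ x₁, HasDerivAt G (r x * F x) x
  coeff_fst_nonneg : ∀ x ∈ Ioo x₀ x₁, 0 ≤ u x
  coeff_snd_nonneg : ∀ x ∈ Ioo x₀ x₁, 0 ≤ r x

lemma monotoneOn_Icc_of_hasDerivAt_nonneg {a b : ℝ} {f f' : ℝ → ℝ}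
    (hf : ContinuousOn f (Icc a b)) (hf' : ∀ x ∈ Ioo a b, HasDerivAt f (f' x) x)
    (hf'₀ : ∀ x ∈ Ioo a b, 0 ≤ f' x) : MonotoneOn f (Icc a b) :=
  monotoneOn_of_hasDerivWithinAt_nonneg (convex_Icc a b) hf
    (by simpa only [interior_Icc] using fun x hx => (hf' x hx).hasDerivWithinAt)
    (by simpa only [interior_Icc] using hf'₀)

namespace IsCooperativeSolution

variable {x₀ x₁ : ℝ} {u r F G : ℝ → ℝ}

lemma monotoneOn_mul (h : IsCooperativeSolution x₀ x₁ u r F G) :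
    MonotoneOn (fun x => F x * G x) (Icc x₀ x₁) :=
  monotoneOn_Icc_of_hasDerivAt_nonneg (h.continuousOn_fst.mul h.continuousOn_snd)
    (fun x hx => (h.hasDerivAt_fst x hx).mul (h.hasDerivAt_snd x hx))
    (fun x hx => by
      have hu := h.coeff_fst_nonneg x hx
      have hr := h.coeff_snd_nonneg x hx
      nlinarith [mul_nonneg hu (mul_self_nonneg (G x)), mul_nonneg hr (mul_self_nonneg (F x))])

lemma fst_mul_snd_nonneg (h : IsCooperativeSolution x₀ x₁ u r F G) (hF₀ : 0 ≤ F x₀)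
    (hG₀ : 0 ≤ G x₀) {x : ℝ} (hx : x ∈ Icc x₀ x₁) : 0 ≤ F x * G x :=
  (mul_nonneg hF₀ hG₀).trans
    (h.monotoneOn_mul (left_mem_Icc.mpr (hx.1.trans hx.2)) hx hx.1)

lemma monotoneOn_snd_sq (h : IsCooperativeSolution x₀ x₁ u r F G) (hF₀ : 0 ≤ F x₀)
    (hG₀ : 0 ≤ G x₀) : MonotoneOn (fun x => G x * G x) (Icc x₀ x₁) :=
  monotoneOn_Icc_of_hasDerivAt_nonneg (h.continuousOn_snd.mul h.continuousOn_snd)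
    (fun x hx => (h.hasDerivAt_snd x hx).mul (h.hasDerivAt_snd x hx))
    (fun x hx => by
      have hFG := h.fst_mul_snd_nonneg hF₀ hG₀ (Ioo_subset_Icc_self hx)
      have hr := h.coeff_snd_nonneg x hx
      nlinarith [mul_nonneg hr hFG])

lemma snd_pos (h : IsCooperativeSolution x₀ x₁ u r F G) (hF₀ : 0 ≤ F x₀) (hG₀ : 0 < G x₀)
    {x : ℝ} (hx : x ∈ Icc x₀ x₁) : 0 < G x := by
  by_contra! hGx
  obtain ⟨y, hy, hGy⟩ : (0 : ℝ) ∈ G '' Icc x₀ x :=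
    intermediate_value_Icc' hx.1 (h.continuousOn_snd.mono (Icc_subset_Icc_right hx.2))
      ⟨hGx, hG₀.le⟩
  have hy' : y ∈ Icc x₀ x₁ := ⟨hy.1, hy.2.trans hx.2⟩
  have hsq := h.monotoneOn_snd_sq hF₀ hG₀.le (left_mem_Icc.mpr (hy'.1.trans hy'.2)) hy' hy.1
  simp only [hGy, mul_zero] at hsq
  nlinarith

lemma monotoneOn_fst (h : IsCooperativeSolution x₀ x₁ u r F G) (hF₀ : 0 ≤ F x₀)
    (hG₀ : 0 < G x₀) : MonotoneOn F (Icc x₀ x₁) :=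
  monotoneOn_Icc_of_hasDerivAt_nonneg h.continuousOn_fst h.hasDerivAt_fst fun x hx =>
    mul_nonneg (h.coeff_fst_nonneg x hx) (h.snd_pos hF₀ hG₀ (Ioo_subset_Icc_self hx)).le

lemma fst_nonneg (h : IsCooperativeSolution x₀ x₁ u r F G) (hF₀ : 0 ≤ F x₀) (hG₀ : 0 < G x₀)
    {x : ℝ} (hx : x ∈ Icc x₀ x₁) : 0 ≤ F x :=
  hF₀.trans (h.monotoneOn_fst hF₀ hG₀ (left_mem_Icc.mpr (hx.1.trans hx.2)) hx hx.1)

lemma monotoneOn_snd (h : IsCooperativeSolution x₀ x₁ u r F G) (hF₀ : 0 ≤ F x₀)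
    (hG₀ : 0 < G x₀) : MonotoneOn G (Icc x₀ x₁) :=
  monotoneOn_Icc_of_hasDerivAt_nonneg h.continuousOn_snd h.hasDerivAt_snd fun x hx =>
    mul_nonneg (h.coeff_snd_nonneg x hx) (h.fst_nonneg hF₀ hG₀ (Ioo_subset_Icc_self hx))

lemma fst_lower_bound (h : IsCooperativeSolution x₀ x₁ u r F G) (hx₀₁ : x₀ ≤ x₁)
    (hF₀ : 0 ≤ F x₀) (hG₀ : 0 < G x₀) {c : ℝ} (hc : ∀ x ∈ Ioo x₀ x₁, c ≤ u x) :
    F x₀ + c * G x₀ * (x₁ - x₀) ≤ F x₁ := by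
  have hmono : MonotoneOn (fun x => F x - c * G x₀ * x) (Icc x₀ x₁) :=
    monotoneOn_Icc_of_hasDerivAt_nonneg
      (h.continuousOn_fst.sub (continuousOn_const.mul continuousOn_id))
      (fun x hx => (h.hasDerivAt_fst x hx).sub ((hasDerivAt_id x).const_mul (c * G x₀)))
      (fun x hx => by
        have hGx := h.monotoneOn_snd hF₀ hG₀ (left_mem_Icc.mpr hx₀₁) (Ioo_subset_Icc_self hx)
          hx.1.le
        have hu := h.coeff_fst_nonneg x hx
        nlinarith [hc x hx, mul_le_mul_of_nonneg_left hGx hu])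
  have := hmono (left_mem_Icc.mpr hx₀₁) (right_mem_Icc.mpr hx₀₁) hx₀₁
  linarith

lemma snd_upper_bound (h : IsCooperativeSolution x₀ x₁ u r F G) (hx₀₁ : x₀ ≤ x₁)
    (hF₀ : 0 ≤ F x₀) (hG₀ : 0 < G x₀) {R : ℝ} (hR : ∀ x ∈ Ioo x₀ x₁, r x ≤ R) :
    G x₁ ≤ G x₀ + R * F x₁ * (x₁ - x₀) := by
  have hmono : MonotoneOn (fun x => R * F x₁ * x - G x) (Icc x₀ x₁) :=
    monotoneOn_Icc_of_hasDerivAt_nonneg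
      ((continuousOn_const.mul continuousOn_id).sub h.continuousOn_snd)
      (fun x hx => ((hasDerivAt_id x).const_mul (R * F x₁)).sub (h.hasDerivAt_snd x hx))
      (fun x hx => by
        have hFx := h.monotoneOn_fst hF₀ hG₀ (Ioo_subset_Icc_self hx) (right_mem_Icc.mpr hx₀₁)
          hx.2.le
        have hF := h.fst_nonneg hF₀ hG₀ (Ioo_subset_Icc_self hx)
        have hr := h.coeff_snd_nonneg x hx
        nlinarith [hR x hx, mul_le_mul_of_nonneg_right (hR x hx) hF,
          mul_le_mul_of_nonneg_left hFx (hr.trans (hR x hx))])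
  have := hmono (left_mem_Icc.mpr hx₀₁) (right_mem_Icc.mpr hx₀₁) hx₀₁
  linarith

end IsCooperativeSolution

lemma hasDerivAt_dI {p₀ x : ℝ} {φ : ℝ → ℝ} (hφ : DifferentiableOn ℝ φ (Icc p₀ 0))
    (hx : x ∈ Ioo p₀ 0) : HasDerivAt φ (dI p₀ φ x) x := by
  have hnhds : Icc p₀ 0 ∈ nhds x := Icc_mem_nhds hx.1 hx.2
  rw [dI, derivWithin_of_mem_nhds hnhds]
  exact (hφ.differentiableAt hnhds).hasDerivAt

lemma IsCooperativeSolution.of_sturmLiouville {p₀ lam μ : ℝ} {a F : ℝ → ℝ} (hp₀ : p₀ < 0)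
    (hlam : lam ≠ 0) (hμ : 0 ≤ μ) (ha : ContDiffOn ℝ 1 a (Icc p₀ 0))
    (hapos : ∀ p ∈ Ioo p₀ 0, 0 < a p) (hF : ContDiffOn ℝ 2 F (Icc p₀ 0))
    (hFe : ∀ p ∈ Ioo p₀ 0,
      lam ^ 2 * dI p₀ (fun q => a q ^ 3 * dI p₀ F q) p = μ * a p * F p) :
    IsCooperativeSolution p₀ 0 (fun x => (a x ^ 3)⁻¹) (fun x => μ * a x / lam ^ 2) F
      (fun x => a x ^ 3 * dI p₀ F x) := by
  have hF' : ContDiffOn ℝ 1 (dI p₀ F) (Icc p₀ 0) :=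
    hF.derivWithin (uniqueDiffOn_Icc hp₀) (by norm_num)
  have hG : ContDiffOn ℝ 1 (fun x => a x ^ 3 * dI p₀ F x) (Icc p₀ 0) := (ha.pow 3).mul hF'
  refine ⟨hF.continuousOn, hG.continuousOn, fun x hx => ?_, fun x hx => ?_,
    fun x hx => by have := hapos x hx; positivity,
    fun x hx => by have := hapos x hx; positivity⟩
  · convert hasDerivAt_dI (hF.differentiableOn two_ne_zero) hx using 1
    field_simp [(hapos x hx).ne']
  · convert hasDerivAt_dI (hG.differentiableOn one_ne_zero) hx using 1
    rw [div_mul_eq_mul_div, ← hFe x hx, mul_div_cancel_left₀ _ (pow_ne_zero 2 hlam)]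

lemma sturmLiouville_endpoint_bounds {p₀ lam μ A : ℝ} {a F : ℝ → ℝ} (hp₀ : p₀ < 0)
    (hlam : lam ≠ 0) (hμ : 0 ≤ μ) (ha : ContDiffOn ℝ 1 a (Icc p₀ 0))
    (hapos : ∀ p ∈ Icc p₀ 0, 0 < a p) (hA : ∀ p ∈ Icc p₀ 0, a p ≤ A)
    (hF : ContDiffOn ℝ 2 F (Icc p₀ 0))
    (hFe : ∀ p ∈ Icc p₀ 0,
      lam ^ 2 * dI p₀ (fun q => a q ^ 3 * dI p₀ F q) p = μ * a p * F p)
    (hF₀ : F p₀ = 0) (hF'₀ : dI p₀ F p₀ = 1) :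
    a p₀ ^ 3 / A ^ 3 * -p₀ ≤ F 0 ∧
      lam ^ 2 * (a 0 ^ 3 * dI p₀ F 0) ≤ lam ^ 2 * a p₀ ^ 3 + μ * A * -p₀ * F 0 := by
  have h := IsCooperativeSolution.of_sturmLiouville hp₀ hlam hμ ha
    (fun p hp => hapos p (Ioo_subset_Icc_self hp)) hF (fun p hp => hFe p (Ioo_subset_Icc_self hp))
  have hap₀ := hapos p₀ (left_mem_Icc.mpr hp₀.le)
  have hG₀ : 0 < a p₀ ^ 3 * dI p₀ F p₀ := by rw [hF'₀, mul_one]; positivity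
  have hlower := h.fst_lower_bound hp₀.le hF₀.ge hG₀ (c := (A ^ 3)⁻¹) fun x hx => by
    have hax := hapos x (Ioo_subset_Icc_self hx)
    gcongr
    exact hA x (Ioo_subset_Icc_self hx)
  have hupper := h.snd_upper_bound hp₀.le hF₀.ge hG₀ (R := μ * A / lam ^ 2) fun x hx => by
    gcongr
    exact hA x (Ioo_subset_Icc_self hx)
  simp only [hF₀, hF'₀, mul_one, zero_sub, zero_add] at hlower hupper
  refine ⟨by rwa [div_mul_eq_mul_div, div_eq_inv_mul, ← mul_assoc], ?_⟩
  calc lam ^ 2 * (a 0 ^ 3 * dI p₀ F 0)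
      ≤ lam ^ 2 * (a p₀ ^ 3 + μ * A / lam ^ 2 * F 0 * -p₀) := by gcongr
    _ = lam ^ 2 * a p₀ ^ 3 + μ * A * -p₀ * F 0 := by field_simp

theorem wronskian_tendsto_atTop_general
    (p₀ lam α g : ℝ) (hp₀ : p₀ < 0) (hlam : 0 < lam) (hα : 0 < α)
    (a : ℝ → ℝ) (ha : ContDiffOn ℝ 1 a (Icc p₀ 0))
    (hapos : ∀ p ∈ Icc p₀ 0, 0 < a p)
    (f : ℝ → ℝ → ℝ)
    (hf : ∀ μ : ℝ, 0 < μ → ContDiffOn ℝ 2 (f μ) (Icc p₀ 0))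
    (hfe : ∀ μ : ℝ, 0 < μ → ∀ p ∈ Icc p₀ 0,
      lam ^ 2 * dI p₀ (fun q => a q ^ 3 * dI p₀ (f μ) q) p = μ * a p * f μ p)
    (hf0 : ∀ μ : ℝ, 0 < μ → f μ p₀ = 0)
    (hf'0 : ∀ μ : ℝ, 0 < μ → dI p₀ (f μ) p₀ = 1) :
    Tendsto (fun μ : ℝ =>
        (g * lam ^ 4 + α * μ ^ 2) * f μ 0 - lam ^ 4 * a 0 ^ 3 * dI p₀ (f μ) 0)
      atTop atTop := by
  obtain ⟨pmax, hpmax, hmax⟩ :=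
    isCompact_Icc.exists_isMaxOn (nonempty_Icc.mpr hp₀.le) ha.continuousOn
  have hap₀ : 0 < a p₀ := hapos p₀ (left_mem_Icc.mpr hp₀.le)
  have hc : 0 < a p₀ ^ 3 / a pmax ^ 3 * -p₀ := by
    have := hapos pmax hpmax
    have := neg_pos.mpr hp₀
    positivity
  set κ : ℝ → ℝ := fun μ => g * lam ^ 4 + μ * (α * μ - lam ^ 2 * a pmax * -p₀) with hκ_def
  have hκ : Tendsto κ atTop atTop :=
    tendsto_atTop_add_const_left _ _ (tendsto_id.atTop_mul_atTop₀
      (tendsto_atTop_add_const_right _ _ (tendsto_id.const_mul_atTop hα)))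
  refine tendsto_atTop_mono' atTop ?_
    (tendsto_atTop_add_const_right _ (-(lam ^ 4 * a p₀ ^ 3)) (hκ.atTop_mul_const hc))
  filter_upwards [eventually_gt_atTop 0, hκ.eventually_ge_atTop 0] with μ hμ hκμ
  obtain ⟨hlower, hupper⟩ := sturmLiouville_endpoint_bounds hp₀ hlam.ne' hμ.le ha hapos
    (fun p hp => hmax hp) (hf μ hμ) (hfe μ hμ) (hf0 μ hμ) (hf'0 μ hμ)
  calc κ μ * (a p₀ ^ 3 / a pmax ^ 3 * -p₀) + -(lam ^ 4 * a p₀ ^ 3)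
      ≤ κ μ * f μ 0 - lam ^ 4 * a p₀ ^ 3 := by linarith [mul_le_mul_of_nonneg_left hlower hκμ]
    _ ≤ _ := by
      simp only [hκ_def]
      linarith [mul_le_mul_of_nonneg_left hupper (sq_nonneg lam)]

/-- For each μ > 0 let f_μ solve λ²·(a³f_μ')' = μ·a·f_μ on [p₀,0] with
f_μ(p₀) = 0 and f_μ'(p₀) = 1. Then
W(μ) = (g·λ⁴ + α·μ²)·f_μ(0) − λ⁴·a(0)³·f_μ'(0) → ∞ as μ → ∞. -/
theorem wronskian_tendsto_atTop
    (p₀ lam α g : ℝ) (hp₀ : p₀ < 0) (hlam : 0 < lam) (hα : 0 < α) (hg : 0 < g)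
    (a : ℝ → ℝ) (ha : ContDiffOn ℝ 1 a (Icc p₀ 0))
    (hapos : ∀ p ∈ Icc p₀ 0, 0 < a p)
    (f : ℝ → ℝ → ℝ)
    (hf : ∀ μ : ℝ, 0 < μ → ContDiffOn ℝ 2 (f μ) (Icc p₀ 0))
    (hfe : ∀ μ : ℝ, 0 < μ → ∀ p ∈ Icc p₀ 0,
      lam ^ 2 * dI p₀ (fun q => a q ^ 3 * dI p₀ (f μ) q) p = μ * a p * f μ p)
    (hf0 : ∀ μ : ℝ, 0 < μ → f μ p₀ = 0)
    (hf'0 : ∀ μ : ℝ, 0 < μ → dI p₀ (f μ) p₀ = 1) :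
    Tendsto (fun μ : ℝ =>
        (g * lam ^ 4 + α * μ ^ 2) * f μ 0 - lam ^ 4 * a 0 ^ 3 * dI p₀ (f μ) 0)
      atTop atTop :=
  wronskian_tendsto_atTop_general p₀ lam α g hp₀ hlam hα a ha hapos f hf hfe hf0 hf'0
end

section
/- Suppose f : [p₀,0] → ℝ is twice continuously differentiable with λ²·(a³f')' = μ·a·f on [p₀,0] and f(p₀) = 0, and h : [p₀,0] → ℝ is twice continuously differentiable with λ²·(a³h')' − μ·a·h = −2λ·(a³f')' on [p₀,0] and h(p₀) = h'(p₀) = 0. Then λ·a(0)³·(f(0)·h'(0) − f'(0)·h(0)) = −2·a(0)³·f(0)·f'(0) + 2·∫_{p₀}^0 a(p)³·f'(p)² dp. -/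
/-!
With `u = a³f'` and `v = a³h'`, the function `W = λ(f v − h u) + 2 f u` satisfies
`W' = 2 a³ f'²`: the Wronskian-type terms `λ(f' v − h' u)` cancel, and multiplying the two
equations by `f` and `h` shows `λ(f v' − h u') = −2 f u'`. Integrating over `[p₀, 0]`
and using `W(p₀) = 0` gives the identity.
-/

open Real Set

theorem HasDerivWithinAt.wronskian_combination {s : Set ℝ} {x lam c f' h' u' v' : ℝ}
    {f h u v : ℝ → ℝ} (hf : HasDerivWithinAt f f' s x) (hh : HasDerivWithinAt h h' s x)
    (hu : HasDerivWithinAt u u' s x) (hv : HasDerivWithinAt v v' s x) (hlam : lam ≠ 0)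
    (hfv : f' * v x = h' * u x) (hu' : lam ^ 2 * u' = c * f x)
    (hv' : lam ^ 2 * v' - c * h x = -2 * lam * u') :
    HasDerivWithinAt (fun p => lam * (f p * v p - h p * u p) + 2 * (f p * u p))
      (2 * (f' * u x)) s x := by
  have hcross : lam * (f x * v' - h x * u') = -2 * (f x * u') :=
    mul_left_cancel₀ hlam (by linear_combination f x * hv' - h x * hu')
  exact ((((hf.mul hv).sub (hh.mul hu)).const_mul lam).add ((hf.mul hu).const_mul 2)).congr_deriv
    (by linear_combination hcross + lam * hfv)

theorem hasDerivWithinAt_dI {p₀ p : ℝ} {n : WithTop ℕ∞} {g : ℝ → ℝ}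
    (hg : ContDiffOn ℝ n g (Icc p₀ 0)) (hn : n ≠ 0) (hp : p ∈ Icc p₀ 0) :
    HasDerivWithinAt g (dI p₀ g p) (Icc p₀ 0) p :=
  (hg.differentiableOn hn p hp).hasDerivWithinAt

theorem lambda_derivative_wronskian_identity_general
    (p₀ lam μ : ℝ) (hp₀ : p₀ < 0) (hlam : 0 < lam)
    (a : ℝ → ℝ) (ha : ContDiffOn ℝ 1 a (Icc p₀ 0))
    (f h : ℝ → ℝ)
    (hf : ContDiffOn ℝ 2 f (Icc p₀ 0)) (hh : ContDiffOn ℝ 2 h (Icc p₀ 0))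
    (hfe : ∀ p ∈ Icc p₀ 0,
      lam ^ 2 * dI p₀ (fun q => a q ^ 3 * dI p₀ f q) p = μ * a p * f p)
    (hf0 : f p₀ = 0)
    (hhe : ∀ p ∈ Icc p₀ 0,
      lam ^ 2 * dI p₀ (fun q => a q ^ 3 * dI p₀ h q) p - μ * a p * h p
        = -2 * lam * dI p₀ (fun q => a q ^ 3 * dI p₀ f q) p)
    (hh0 : h p₀ = 0) (hh'0 : dI p₀ h p₀ = 0) :
    lam * a 0 ^ 3 * (f 0 * dI p₀ h 0 - dI p₀ f 0 * h 0)
      = -2 * a 0 ^ 3 * f 0 * dI p₀ f 0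
        + 2 * ∫ p in p₀..(0:ℝ), a p ^ 3 * (dI p₀ f p) ^ 2 := by
  have hU := uniqueDiffOn_Icc hp₀
  have hf1 : ContDiffOn ℝ 1 f (Icc p₀ 0) := hf.of_le one_le_two
  have hh1 : ContDiffOn ℝ 1 h (Icc p₀ 0) := hh.of_le one_le_two
  set u := fun q => a q ^ 3 * dI p₀ f q
  set v := fun q => a q ^ 3 * dI p₀ h q
  have hu : ContDiffOn ℝ 1 u (Icc p₀ 0) := (ha.pow 3).mul (hf.derivWithin hU (by norm_num))
  have hv : ContDiffOn ℝ 1 v (Icc p₀ 0) := (ha.pow 3).mul (hh.derivWithin hU (by norm_num))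
  set W := fun p => lam * (f p * v p - h p * u p) + 2 * (f p * u p)
  have hW : ContDiffOn ℝ 1 W (Icc p₀ 0) :=
    (contDiffOn_const.mul ((hf1.mul hv).sub (hh1.mul hu))).add (contDiffOn_const.mul (hf1.mul hu))
  have hW' : EqOn (dI p₀ W) (fun p => 2 * (a p ^ 3 * dI p₀ f p ^ 2)) (uIcc p₀ 0) := by
    intro p hp
    rw [uIcc_of_le hp₀.le] at hp
    have hderiv := (hasDerivWithinAt_dI hf1 one_ne_zero hp).wronskian_combination
      (hasDerivWithinAt_dI hh1 one_ne_zero hp) (hasDerivWithinAt_dI hu one_ne_zero hp)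
      (hasDerivWithinAt_dI hv one_ne_zero hp) hlam.ne' (by ring) (hfe p hp) (hhe p hp)
    rw [dI, hderiv.derivWithin (hU p hp)]
    ring
  have hFTC := intervalIntegral.integral_derivWithin_Icc_of_contDiffOn_Icc hW hp₀.le
  have hWp₀ : W p₀ = 0 := by simp [W, u, v, hf0, hh0, hh'0]
  rw [← dI, intervalIntegral.integral_congr hW', intervalIntegral.integral_const_mul, hWp₀,
    sub_zero] at hFTC
  linear_combination -hFTC

/-- If f solves λ²·(a³f')' = μ·a·f on [p₀,0] with f(p₀) = 0, and h solves
λ²·(a³h')' − μ·a·h = −2λ·(a³f')' with h(p₀) = h'(p₀) = 0, then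
λ·a(0)³·(f(0)·h'(0) − f'(0)·h(0)) = −2·a(0)³·f(0)·f'(0) + 2·∫_{p₀}^0 a³·f'². -/
theorem lambda_derivative_wronskian_identity
    (p₀ lam μ : ℝ) (hp₀ : p₀ < 0) (hlam : 0 < lam)
    (a : ℝ → ℝ) (ha : ContDiffOn ℝ 1 a (Icc p₀ 0))
    (hapos : ∀ p ∈ Icc p₀ 0, 0 < a p)
    (f h : ℝ → ℝ)
    (hf : ContDiffOn ℝ 2 f (Icc p₀ 0)) (hh : ContDiffOn ℝ 2 h (Icc p₀ 0))
    (hfe : ∀ p ∈ Icc p₀ 0,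
      lam ^ 2 * dI p₀ (fun q => a q ^ 3 * dI p₀ f q) p = μ * a p * f p)
    (hf0 : f p₀ = 0)
    (hhe : ∀ p ∈ Icc p₀ 0,
      lam ^ 2 * dI p₀ (fun q => a q ^ 3 * dI p₀ h q) p - μ * a p * h p
        = -2 * lam * dI p₀ (fun q => a q ^ 3 * dI p₀ f q) p)
    (hh0 : h p₀ = 0) (hh'0 : dI p₀ h p₀ = 0) :
    lam * a 0 ^ 3 * (f 0 * dI p₀ h 0 - dI p₀ f 0 * h 0)
      = -2 * a 0 ^ 3 * f 0 * dI p₀ f 0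
        + 2 * ∫ p in p₀..(0:ℝ), a p ^ 3 * (dI p₀ f p) ^ 2 :=
  lambda_derivative_wronskian_identity_general p₀ lam μ hp₀ hlam a ha f h hf hh hfe hf0 hhe hh0 hh'0
end

section
/- Suppose f : [p₀,0] → ℝ is twice continuously differentiable with λ²·(a³f')' = μ·a·f on [p₀,0], and h : [p₀,0] → ℝ is twice continuously differentiable with λ²·(a³h')' − μ·a·h = a·f on [p₀,0] and h(p₀) = h'(p₀) = 0. Then a(0)³·(f(0)·h'(0) − f'(0)·h(0)) = (1/λ²)·∫_{p₀}^0 a(p)·f(p)² dp. -/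
open Real Set

/-!
Write `L u = (a³ u')'`. For the Wronskian-type quantity `W = f · a³h' − h · a³f'` the cross
terms `f' a³ h'` cancel, so `W' = f · L h − h · L f` (Lagrange's identity), and the two equations
turn this into `a f² / λ²`. Integrating from `p₀`, where `W` vanishes because `h(p₀) = h'(p₀) = 0`,
gives the identity at `0`.
-/

section SturmLiouville

variable {s t : ℝ}

theorem ContDiffOn.hasDerivAt_derivWithin_Icc {g : ℝ → ℝ} (hg : ContDiffOn ℝ 1 g (Icc s t))
    {x : ℝ} (hx : x ∈ Ioo s t) : HasDerivAt g (derivWithin g (Icc s t) x) x :=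
  ((hg.differentiableOn one_ne_zero) x (Ioo_subset_Icc_self hx)).hasDerivWithinAt.hasDerivAt
    (Icc_mem_nhds hx.1 hx.2)

/-- The Wronskian of the operator `u ↦ (P u')'`. -/
noncomputable def sturmWronskian (S : Set ℝ) (P u v : ℝ → ℝ) (x : ℝ) : ℝ :=
  u x * (P x * derivWithin v S x) - v x * (P x * derivWithin u S x)

/-- Lagrange's identity for `u ↦ (P u')'` on `[s, t]`, in integrated form. -/
theorem sturmWronskian_sub_eq_integral (hst : s < t) {P u v : ℝ → ℝ}
    (hP : ContDiffOn ℝ 1 P (Icc s t)) (hu : ContDiffOn ℝ 2 u (Icc s t))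
    (hv : ContDiffOn ℝ 2 v (Icc s t)) :
    sturmWronskian (Icc s t) P u v t - sturmWronskian (Icc s t) P u v s
      = ∫ x in s..t,
          (u x * derivWithin (fun y => P y * derivWithin v (Icc s t) y) (Icc s t) x
            - v x * derivWithin (fun y => P y * derivWithin u (Icc s t) y) (Icc s t) x) := by
  have hI : UniqueDiffOn ℝ (Icc s t) := uniqueDiffOn_Icc hst
  have hu' := hu.derivWithin hI (m := 1) (by norm_num)
  have hv' := hv.derivWithin hI (m := 1) (by norm_num)
  have hPu' : ContDiffOn ℝ 1 (fun y => P y * derivWithin u (Icc s t) y) (Icc s t) := hP.mul hu'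
  have hPv' : ContDiffOn ℝ 1 (fun y => P y * derivWithin v (Icc s t) y) (Icc s t) := hP.mul hv'
  have hu1 : ContDiffOn ℝ 1 u (Icc s t) := hu.of_le (by norm_num)
  have hv1 : ContDiffOn ℝ 1 v (Icc s t) := hv.of_le (by norm_num)
  symm
  refine intervalIntegral.integral_eq_sub_of_hasDeriv_right_of_le hst.le
    ((hu.continuousOn.mul hPv'.continuousOn).sub (hv.continuousOn.mul hPu'.continuousOn))
    (fun x hx => ?_) ?_
  · exact (((hu1.hasDerivAt_derivWithin_Icc hx).mul (hPv'.hasDerivAt_derivWithin_Icc hx)).sub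
      ((hv1.hasDerivAt_derivWithin_Icc hx).mul (hPu'.hasDerivAt_derivWithin_Icc hx))).congr_deriv
      (by ring) |>.hasDerivWithinAt
  · refine ContinuousOn.intervalIntegrable ?_
    rw [uIcc_of_le hst.le]
    exact (hu.continuousOn.mul (hPv'.continuousOn_derivWithin hI le_rfl)).sub
      (hv.continuousOn.mul (hPu'.continuousOn_derivWithin hI le_rfl))

end SturmLiouville

theorem mu_derivative_wronskian_identity_general
    (p₀ lam μ : ℝ) (hp₀ : p₀ < 0) (hlam : 0 < lam)
    (a : ℝ → ℝ) (ha : ContDiffOn ℝ 1 a (Icc p₀ 0))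
    (f h : ℝ → ℝ)
    (hf : ContDiffOn ℝ 2 f (Icc p₀ 0)) (hh : ContDiffOn ℝ 2 h (Icc p₀ 0))
    (hfe : ∀ p ∈ Icc p₀ 0,
      lam ^ 2 * dI p₀ (fun q => a q ^ 3 * dI p₀ f q) p = μ * a p * f p)
    (hhe : ∀ p ∈ Icc p₀ 0,
      lam ^ 2 * dI p₀ (fun q => a q ^ 3 * dI p₀ h q) p - μ * a p * h p
        = a p * f p)
    (hh0 : h p₀ = 0) (hh'0 : dI p₀ h p₀ = 0) :
    a 0 ^ 3 * (f 0 * dI p₀ h 0 - dI p₀ f 0 * h 0)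
      = (1 / lam ^ 2) * ∫ p in p₀..(0:ℝ), a p * f p ^ 2 := by
  unfold dI at hfe hhe hh'0 ⊢
  have hlam2 : lam ^ 2 ≠ 0 := by positivity
  have hW := sturmWronskian_sub_eq_integral hp₀ (ha.pow 3) hf hh
  have hWp₀ : sturmWronskian (Icc p₀ 0) (fun q => a q ^ 3) f h p₀ = 0 := by
    simp [sturmWronskian, hh0, hh'0]
  have hLagrange : ∀ p ∈ uIcc p₀ 0,
      f p * derivWithin (fun q => a q ^ 3 * derivWithin h (Icc p₀ 0) q) (Icc p₀ 0) p
        - h p * derivWithin (fun q => a q ^ 3 * derivWithin f (Icc p₀ 0) q) (Icc p₀ 0) p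
        = a p * f p ^ 2 / lam ^ 2 := by
    intro p hp
    rw [uIcc_of_le hp₀.le] at hp
    field_simp
    linear_combination f p * hhe p hp - h p * hfe p hp
  rw [hWp₀, sub_zero, intervalIntegral.integral_congr hLagrange,
    intervalIntegral.integral_div] at hW
  rw [one_div_mul_eq_div, ← hW, sturmWronskian]
  ring

/-- If f solves λ²·(a³f')' = μ·a·f on [p₀,0], and h solves
λ²·(a³h')' − μ·a·h = a·f with h(p₀) = h'(p₀) = 0, then
a(0)³·(f(0)·h'(0) − f'(0)·h(0)) = (1/λ²)·∫_{p₀}^0 a·f². -/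
theorem mu_derivative_wronskian_identity
    (p₀ lam μ : ℝ) (hp₀ : p₀ < 0) (hlam : 0 < lam)
    (a : ℝ → ℝ) (ha : ContDiffOn ℝ 1 a (Icc p₀ 0))
    (hapos : ∀ p ∈ Icc p₀ 0, 0 < a p)
    (f h : ℝ → ℝ)
    (hf : ContDiffOn ℝ 2 f (Icc p₀ 0)) (hh : ContDiffOn ℝ 2 h (Icc p₀ 0))
    (hfe : ∀ p ∈ Icc p₀ 0,
      lam ^ 2 * dI p₀ (fun q => a q ^ 3 * dI p₀ f q) p = μ * a p * f p)
    (hhe : ∀ p ∈ Icc p₀ 0,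
      lam ^ 2 * dI p₀ (fun q => a q ^ 3 * dI p₀ h q) p - μ * a p * h p
        = a p * f p)
    (hh0 : h p₀ = 0) (hh'0 : dI p₀ h p₀ = 0) :
    a 0 ^ 3 * (f 0 * dI p₀ h 0 - dI p₀ f 0 * h 0)
      = (1 / lam ^ 2) * ∫ p in p₀..(0:ℝ), a p * f p ^ 2 :=
  mu_derivative_wronskian_identity_general p₀ lam μ hp₀ hlam a ha f h hf hh hfe hhe hh0 hh'0
end

section
/- Assume g·∫_{p₀}^0 a(p)^{-3} dp < 1. If f : [p₀,0] → ℝ is twice continuously differentiable and satisfies λ²·(a³f')' = μ·a·f on [p₀,0], f(p₀) = 0, f'(p₀) = 1, and the boundary condition (g·λ⁴ + α·μ²)·f(0) = λ⁴·a(0)³·f'(0), then λ²·∫_{p₀}^0 a(p)·f(p)² dp < 2·α·μ·f(0)². -/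
/-!
Multiply the equation `λ² (a³ f')' = μ a f` by `f` and integrate by parts: since `f(p₀) = 0`,
`μ ∫ a f² + λ² ∫ a³ f'² = λ² a(0)³ f'(0) f(0)`, and the boundary condition turns the right-hand
side into `(g λ² + α μ² / λ²) f(0)²`. Writing `f(0) = ∫ f' = ∫ a^(-3/2) · a^(3/2) f'`,
Cauchy–Schwarz gives `f(0)² ≤ (∫ a⁻³) ∫ a³ f'²`, so the hypothesis `g ∫ a⁻³ < 1` makes
`g f(0)² < ∫ a³ f'²` (strictly, as `f'(p₀) = 1`). Hence `λ² ∫ a f² < α μ f(0)²`.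
-/

open Real Set MeasureTheory

theorem sq_integral_le_integral_inv_mul_integral_mul_sq {a b : ℝ} (hab : a ≤ b) {w u : ℝ → ℝ}
    (hw : ContinuousOn w (Icc a b)) (hw_pos : ∀ x ∈ Icc a b, 0 < w x)
    (hu : ContinuousOn u (Icc a b)) :
    (∫ x in a..b, u x) ^ 2 ≤ (∫ x in a..b, (w x)⁻¹) * ∫ x in a..b, w x * u x ^ 2 := by
  have hint {v : ℝ → ℝ} (hv : ContinuousOn v (Icc a b)) : IntervalIntegrable v volume a b :=
    hv.intervalIntegrable_of_Icc hab
  have hw_inv : ContinuousOn (fun x => (w x)⁻¹) (Icc a b) :=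
    hw.inv₀ fun x hx => (hw_pos x hx).ne'
  -- `∫ w (u - t w⁻¹)² ≥ 0` for every `t`, so this quadratic has nonpositive discriminant.
  have hquad : ∀ t : ℝ, 0 ≤ (∫ x in a..b, (w x)⁻¹) * (t * t) + (-2 * ∫ x in a..b, u x) * t
      + ∫ x in a..b, w x * u x ^ 2 := by
    intro t
    have hsq : ∫ x in a..b, w x * (u x - t * (w x)⁻¹) ^ 2 =
        ∫ x in a..b, (t ^ 2 * (w x)⁻¹ - 2 * t * u x + w x * u x ^ 2) := by
      refine intervalIntegral.integral_congr fun x hx => ?_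
      rw [uIcc_of_le hab] at hx
      have := (hw_pos x hx).ne'
      field_simp
      ring
    have h₁ : IntervalIntegrable (fun x => t ^ 2 * (w x)⁻¹) volume a b :=
      hint (continuousOn_const.mul hw_inv)
    have h₂ : IntervalIntegrable (fun x => 2 * t * u x) volume a b :=
      hint (continuousOn_const.mul hu)
    have h₃ : IntervalIntegrable (fun x => w x * u x ^ 2) volume a b := hint (hw.mul (hu.pow 2))
    rw [intervalIntegral.integral_add (h₁.sub h₂) h₃, intervalIntegral.integral_sub h₁ h₂,
      intervalIntegral.integral_const_mul, intervalIntegral.integral_const_mul] at hsq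
    have : 0 ≤ ∫ x in a..b, w x * (u x - t * (w x)⁻¹) ^ 2 :=
      intervalIntegral.integral_nonneg hab fun x hx => mul_nonneg (hw_pos x hx).le (sq_nonneg _)
    nlinarith
  have := discrim_le_zero hquad
  rw [discrim] at this
  linarith

theorem integral_mul_sq_add_integral_mul_derivWithin_sq {a b : ℝ} (hab : a < b)
    {P q f : ℝ → ℝ} (hP : ContDiffOn ℝ 1 P (Icc a b)) (hf : ContDiffOn ℝ 2 f (Icc a b))
    (hode : ∀ x ∈ Icc a b,
      derivWithin (fun y => P y * derivWithin f (Icc a b) y) (Icc a b) x = q x * f x) :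
    (∫ x in a..b, q x * f x ^ 2) + ∫ x in a..b, P x * derivWithin f (Icc a b) x ^ 2 =
      P b * derivWithin f (Icc a b) b * f b - P a * derivWithin f (Icc a b) a * f a := by
  set s := Icc a b
  set f' := derivWithin f s
  set u := fun y => P y * f' y
  have hs : UniqueDiffOn ℝ s := uniqueDiffOn_Icc hab
  have hu_s : uIcc a b = s := uIcc_of_le hab.le
  have hf' : ContDiffOn ℝ 1 f' s := hf.derivWithin hs le_rfl
  have hu : ContDiffOn ℝ 1 u s := hP.mul hf'
  have hu' : ContinuousOn (derivWithin u s) s := hu.continuousOn_derivWithin hs le_rfl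
  have hqf : ∫ x in a..b, q x * f x ^ 2 = ∫ x in a..b, derivWithin u s x * f x :=
    intervalIntegral.integral_congr fun x hx => by
      rw [hu_s] at hx
      simp only [hode x hx]
      ring
  have hPf : ∫ x in a..b, P x * f' x ^ 2 = ∫ x in a..b, u x * f' x :=
    intervalIntegral.integral_congr fun x _ => by simp only [u]; ring
  have hi₁ : IntervalIntegrable (fun x => derivWithin u s x * f x) volume a b :=
    (hu'.mul hf.continuousOn).intervalIntegrable_of_Icc hab.le
  have hi₂ : IntervalIntegrable (fun x => u x * f' x) volume a b :=
    (hu.continuousOn.mul hf'.continuousOn).intervalIntegrable_of_Icc hab.le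
  rw [hqf, hPf, ← intervalIntegral.integral_add hi₁ hi₂]
  refine intervalIntegral.integral_deriv_mul_eq_sub_of_hasDerivWithinAt (fun x hx => ?_)
    (fun x hx => ?_) (hu'.intervalIntegrable_of_Icc hab.le)
    (hf'.continuousOn.intervalIntegrable_of_Icc hab.le) <;> rw [hu_s] at hx ⊢
  · exact (hu.differentiableOn one_ne_zero x hx).hasDerivWithinAt
  · exact (hf.differentiableOn two_ne_zero x hx).hasDerivWithinAt

/-- Assume g·∫_{p₀}^0 a⁻³ < 1. If f solves λ²·(a³f')' = μ·a·f on [p₀,0] with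
f(p₀) = 0, f'(p₀) = 1 and the boundary condition
(g·λ⁴ + α·μ²)·f(0) = λ⁴·a(0)³·f'(0), then
λ²·∫_{p₀}^0 a·f² < 2·α·μ·f(0)². -/
theorem eigenfunction_integral_estimate
    (p₀ lam μ α g : ℝ) (hp₀ : p₀ < 0) (hlam : 0 < lam) (hμ : 0 < μ)
    (hα : 0 < α) (hg : 0 < g)
    (a : ℝ → ℝ) (ha : ContDiffOn ℝ 1 a (Icc p₀ 0))
    (hapos : ∀ p ∈ Icc p₀ 0, 0 < a p)
    (hcond : (g * ∫ p in p₀..(0:ℝ), (a p ^ 3)⁻¹) < 1)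
    (f : ℝ → ℝ) (hf : ContDiffOn ℝ 2 f (Icc p₀ 0))
    (hfe : ∀ p ∈ Icc p₀ 0,
      lam ^ 2 * dI p₀ (fun q => a q ^ 3 * dI p₀ f q) p = μ * a p * f p)
    (hf0 : f p₀ = 0) (hf'0 : dI p₀ f p₀ = 1)
    (hbc : (g * lam ^ 4 + α * μ ^ 2) * f 0 = lam ^ 4 * a 0 ^ 3 * dI p₀ f 0) :
    lam ^ 2 * (∫ p in p₀..(0:ℝ), a p * f p ^ 2) < 2 * α * μ * f 0 ^ 2 := by
  unfold dI at hfe hf'0 hbc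
  have hf' : ContinuousOn (derivWithin f (Icc p₀ 0)) (Icc p₀ 0) :=
    hf.continuousOn_derivWithin (uniqueDiffOn_Icc hp₀) one_le_two
  have henergy := integral_mul_sq_add_integral_mul_derivWithin_sq hp₀ (ha.pow 3) hf
    (q := fun p => μ / lam ^ 2 * a p) fun p hp => by
      rw [div_mul_eq_mul_div, div_mul_eq_mul_div, eq_div_iff (by positivity)]
      linarith [hfe p hp]
  simp only [mul_assoc, intervalIntegral.integral_const_mul, hf0, mul_zero, sub_zero] at henergy
  have hCS := sq_integral_le_integral_inv_mul_integral_mul_sq (w := fun p => a p ^ 3) hp₀.le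
    (ha.continuousOn.pow 3) (fun p hp => pow_pos (hapos p hp) 3) hf'
  rw [intervalIntegral.integral_derivWithin_Icc_of_contDiffOn_Icc (hf.of_le one_le_two) hp₀.le,
    hf0, sub_zero] at hCS
  have hI : 0 < ∫ p in p₀..0, a p ^ 3 * derivWithin f (Icc p₀ 0) p ^ 2 :=
    intervalIntegral.integral_pos hp₀ ((ha.continuousOn.pow 3).mul (hf'.pow 2))
      (fun p hp => by have := hapos p (Ioc_subset_Icc_self hp); positivity)
      ⟨p₀, left_mem_Icc.2 hp₀.le, by simp [hf'0, hapos p₀ (left_mem_Icc.2 hp₀.le)]⟩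
  set K := ∫ p in p₀..0, a p * f p ^ 2
  set I := ∫ p in p₀..0, a p ^ 3 * derivWithin f (Icc p₀ 0) p ^ 2
  set J := ∫ p in p₀..0, (a p ^ 3)⁻¹
  have hgI : g * f 0 ^ 2 < I :=
    calc g * f 0 ^ 2 ≤ g * (J * I) := by gcongr
      _ = (g * J) * I := by ring
      _ < I := mul_lt_of_lt_one_left hI hcond
  have hbalance : lam ^ 2 * μ * K + lam ^ 4 * I = (g * lam ^ 4 + α * μ ^ 2) * f 0 ^ 2 := by
    field_simp at henergy
    linear_combination lam ^ 2 * henergy - f 0 * hbc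
  have hK : lam ^ 2 * K < α * μ * f 0 ^ 2 := by
    refine lt_of_mul_lt_mul_left ?_ hμ.le
    nlinarith [pow_pos hlam 4]
  have : 0 ≤ α * μ * f 0 ^ 2 := by positivity
  linarith
end

section
/- Let h : ℝ × [p₀,0] → ℝ be twice continuously differentiable and 1-periodic in its first variable q, and suppose that λ²·∂_{pp}h(q,p) + a(p)^{-2}·∂_{qq}h(q,p) − 3·λ²·γ(p)·a(p)^{-2}·∂_p h(q,p) = 0 for all (q,p) ∈ ℝ × [p₀,0]. Then for every natural number k the Fourier coefficient h_k(p) := ∫_0^1 h(q,p)·cos(2kπq) dq defines a twice continuously differentiable function on [p₀,0] which satisfies λ²·(a³·h_k')'(p) = (2kπ)²·a(p)·h_k(p) for all p ∈ [p₀,0]. -/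
/-!
Differentiating under the integral sign, justified on the closed interval by writing
`h(q, p) = h(q, p₀) + ∫_{p₀}^p ∂_p h(q, τ) dτ` and exchanging the two integrals, shows that `h_k`
is `C²` and that `h_k'`, `h_k''` are the cosine coefficients of `∂_p h`, `∂_pp h`. Integrating the
equation against `cos (2kπq)` over a period and integrating by parts twice in `q` (periodicity
kills the boundary terms) turns the coefficient of `∂_qq h` into `-(2kπ)² h_k`, which leaves the
ordinary differential equation `λ² h_k'' - 3λ²γa⁻² h_k' = (2kπ)² a⁻² h_k`. Multiplied by `a³`,
and since `γ = -a a'`, this is `λ² (a³ h_k')' = (2kπ)² a h_k`.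
-/

open Real Set

open MeasureTheory Function

section ParametricIntegral

variable {F F' : ℝ → ℝ → ℝ} {a b s t : ℝ}

theorem continuousOn_intervalIntegral_of_continuousOn_uncurry {S : Set ℝ}
    (hF : ContinuousOn (uncurry F) (univ ×ˢ S)) :
    ContinuousOn (fun p => ∫ q in a..b, F q p) S := by
  rw [continuousOn_iff_continuous_domRestrict]
  have hcont : Continuous (uncurry fun (p : S) q => F q p) :=
    hF.comp_continuous (continuous_snd.prodMk (continuous_subtype_val.comp continuous_fst))
      fun z => ⟨mem_univ _, z.1.2⟩
  exact intervalIntegral.continuous_parametric_intervalIntegral_of_continuous' hcont a b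

theorem intervalIntegral_eq_add_integral_of_hasDerivWithinAt
    (hF : ContinuousOn (uncurry F) (univ ×ˢ Icc s t))
    (hF' : ContinuousOn (uncurry F') (univ ×ˢ Icc s t))
    (hderiv : ∀ q, ∀ p ∈ Icc s t, HasDerivWithinAt (F q) (F' q p) (Icc s t) p)
    {p : ℝ} (hp : p ∈ Icc s t) :
    ∫ q in a..b, F q p = (∫ q in a..b, F q s) + ∫ τ in s..p, ∫ q in a..b, F' q τ := by
  have hsub : Icc s p ⊆ Icc s t := Icc_subset_Icc_right hp.2
  have hslice : ∀ q, ContinuousOn (F' q) (Icc s t) := fun q => hF'.uncurry_left q (mem_univ q)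
  have hftc : ∀ q, ∫ τ in s..p, F' q τ = F q p - F q s := fun q =>
    intervalIntegral.integral_eq_sub_of_hasDerivAt_of_le hp.1
      (fun τ hτ => (hderiv q τ (hsub hτ)).continuousWithinAt.mono hsub)
      (fun τ hτ => (hderiv q τ (hsub (Ioo_subset_Icc_self hτ))).hasDerivAt
        (Icc_mem_nhds hτ.1 (hτ.2.trans_le hp.2)))
      (ContinuousOn.intervalIntegrable_of_Icc hp.1 ((hslice q).mono hsub))
  have hfubini : ∫ q in a..b, ∫ τ in s..p, F' q τ = ∫ τ in s..p, ∫ q in a..b, F' q τ := by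
    refine intervalIntegral_intervalIntegral_swap ?_
    refine ((hF'.mono (prod_mono (subset_univ _) hsub)).integrableOn_compact
      (isCompact_uIcc.prod isCompact_Icc)).mono_set (prod_mono uIoc_subset_uIcc ?_)
    rw [uIoc_of_le hp.1]
    exact Ioc_subset_Icc_self
  have hint : ∀ p ∈ Icc s t, IntervalIntegrable (fun q => F q p) volume a b := fun p hp =>
    (continuousOn_univ.1 (hF.uncurry_right p hp)).intervalIntegrable a b
  rw [← hfubini, intervalIntegral.integral_congr fun q _ => hftc q,
    intervalIntegral.integral_sub (hint p hp) (hint s (left_mem_Icc.2 (hp.1.trans hp.2)))]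
  ring

theorem hasDerivWithinAt_intervalIntegral_of_hasDerivWithinAt
    (hF : ContinuousOn (uncurry F) (univ ×ˢ Icc s t))
    (hF' : ContinuousOn (uncurry F') (univ ×ˢ Icc s t))
    (hderiv : ∀ q, ∀ p ∈ Icc s t, HasDerivWithinAt (F q) (F' q p) (Icc s t) p)
    {p : ℝ} (hp : p ∈ Icc s t) :
    HasDerivWithinAt (fun p => ∫ q in a..b, F q p) (∫ q in a..b, F' q p) (Icc s t) p := by
  have hG : ContinuousOn (fun τ => ∫ q in a..b, F' q τ) (Icc s t) :=
    continuousOn_intervalIntegral_of_continuousOn_uncurry hF'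
  have : Fact (p ∈ Icc s t) := ⟨hp⟩
  have hprim : HasDerivWithinAt (fun u => ∫ τ in s..u, ∫ q in a..b, F' q τ)
      (∫ q in a..b, F' q p) (Icc s t) p :=
    intervalIntegral.integral_hasDerivWithinAt_right
      (ContinuousOn.intervalIntegrable_of_Icc hp.1 (hG.mono (Icc_subset_Icc_right hp.2)))
      (hG.stronglyMeasurableAtFilter_nhdsWithin measurableSet_Icc p) (hG p hp)
  exact (hprim.const_add _).congr
    (fun u hu => intervalIntegral_eq_add_integral_of_hasDerivWithinAt hF hF' hderiv hu)
    (intervalIntegral_eq_add_integral_of_hasDerivWithinAt hF hF' hderiv hp)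

end ParametricIntegral

section PartialDerivative

variable {F : ℝ → ℝ → ℝ} {S : Set ℝ}

theorem hasDerivWithinAt_fderivWithin_uncurry (hF : DifferentiableOn ℝ (uncurry F) (univ ×ˢ S))
    (q : ℝ) {p : ℝ} (hp : p ∈ S) :
    HasDerivWithinAt (F q) (fderivWithin ℝ (uncurry F) (univ ×ˢ S) (q, p) (0, 1)) S p := by
  have hline : HasDerivWithinAt (fun p' : ℝ => (q, p')) ((0 : ℝ), (1 : ℝ)) S p :=
    (hasDerivWithinAt_const p S q).prodMk (hasDerivWithinAt_id p S)
  exact (hF (q, p) ⟨mem_univ q, hp⟩).hasFDerivWithinAt.comp_hasDerivWithinAt p hline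
    fun _ hx => ⟨mem_univ q, hx⟩

theorem ContDiffOn.uncurry_derivWithin {n : ℕ}
    (hF : ContDiffOn ℝ (n + 1) (uncurry F) (univ ×ˢ S)) (hS : UniqueDiffOn ℝ S) :
    ContDiffOn ℝ n (uncurry fun q => derivWithin (F q) S) (univ ×ˢ S) := by
  have hpartial : ContDiffOn ℝ n
      (fun z => fderivWithin ℝ (uncurry F) (univ ×ˢ S) z (0, 1)) (univ ×ˢ S) :=
    (hF.fderivWithin (uniqueDiffOn_univ.prod hS) le_rfl).clm_apply contDiffOn_const
  refine hpartial.congr fun z hz => ?_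
  exact (hasDerivWithinAt_fderivWithin_uncurry (hF.differentiableOn (by simp)) z.1 hz.2
    |>.derivWithin (hS z.2 hz.2))

end PartialDerivative

section WeightedIntegral

variable {F : ℝ → ℝ → ℝ} {w : ℝ → ℝ} {a b s t : ℝ}

theorem hasDerivWithinAt_intervalIntegral_mul_of_contDiffOn (hst : s < t)
    (hF : ContDiffOn ℝ 1 (uncurry F) (univ ×ˢ Icc s t)) (hw : Continuous w)
    {p : ℝ} (hp : p ∈ Icc s t) :
    HasDerivWithinAt (fun p => ∫ q in a..b, F q p * w q)
      (∫ q in a..b, derivWithin (F q) (Icc s t) p * w q) (Icc s t) p := by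
  have hw' : ContinuousOn (fun z : ℝ × ℝ => w z.1) (univ ×ˢ Icc s t) :=
    (hw.comp continuous_fst).continuousOn
  have hF' : ContinuousOn (uncurry fun q => derivWithin (F q) (Icc s t)) (univ ×ˢ Icc s t) :=
    (hF.uncurry_derivWithin (uniqueDiffOn_Icc hst)).continuousOn
  refine hasDerivWithinAt_intervalIntegral_of_hasDerivWithinAt (F := fun q p => F q p * w q)
    (F' := fun q p => derivWithin (F q) (Icc s t) p * w q) (hF.continuousOn.mul hw')
    (hF'.mul hw') (fun q p hp => ?_) hp
  exact (hasDerivWithinAt_fderivWithin_uncurry (hF.differentiableOn one_ne_zero) q hp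
    |>.differentiableWithinAt.hasDerivWithinAt.mul_const (w q))

theorem contDiffOn_intervalIntegral_mul {n : ℕ} (hst : s < t)
    (hF : ContDiffOn ℝ n (uncurry F) (univ ×ˢ Icc s t)) (hw : Continuous w) :
    ContDiffOn ℝ n (fun p => ∫ q in a..b, F q p * w q) (Icc s t) := by
  induction n generalizing F with
  | zero =>
    exact contDiffOn_zero.2 <| continuousOn_intervalIntegral_of_continuousOn_uncurry
      (F := fun q p => F q p * w q) (hF.continuousOn.mul (hw.comp continuous_fst).continuousOn)
  | succ n ih =>
    push_cast at hF ⊢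
    have hderiv := fun p (hp : p ∈ Icc s t) =>
      hasDerivWithinAt_intervalIntegral_mul_of_contDiffOn (a := a) (b := b) hst
        (hF.of_le (by simp)) hw hp
    rw [contDiffOn_succ_iff_derivWithin (uniqueDiffOn_Icc hst)]
    refine ⟨fun p hp => (hderiv p hp).differentiableWithinAt, by simp, ?_⟩
    exact (ih (hF.uncurry_derivWithin (uniqueDiffOn_Icc hst))).congr fun p hp =>
      (hderiv p hp).derivWithin (uniqueDiffOn_Icc hst p hp)

end WeightedIntegral

theorem integral_deriv_deriv_mul_sub_mul_deriv_deriv {f f' f'' g g' g'' : ℝ → ℝ} {a b : ℝ}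
    (hf : ∀ x ∈ uIcc a b, HasDerivAt f (f' x) x) (hf' : ∀ x ∈ uIcc a b, HasDerivAt f' (f'' x) x)
    (hg : ∀ x ∈ uIcc a b, HasDerivAt g (g' x) x) (hg' : ∀ x ∈ uIcc a b, HasDerivAt g' (g'' x) x)
    (hint : IntervalIntegrable (fun x => f'' x * g x - f x * g'' x) volume a b) :
    ∫ x in a..b, (f'' x * g x - f x * g'' x)
      = (f' b * g b - f b * g' b) - (f' a * g a - f a * g' a) :=
  intervalIntegral.integral_eq_sub_of_hasDerivAt (fun x hx =>
    (((hf' x hx).mul (hg x hx)).sub ((hf x hx).mul (hg' x hx))).congr_deriv (by ring)) hint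

theorem integral_deriv_deriv_mul_cos_of_periodic {f : ℝ → ℝ} (hf : ContDiff ℝ 2 f)
    (hper : Periodic f 1) (k : ℕ) :
    ∫ q in (0:ℝ)..1, deriv (deriv f) q * cos (2 * k * π * q)
      = -(2 * k * π) ^ 2 * ∫ q in (0:ℝ)..1, f q * cos (2 * k * π * q) := by
  set c : ℝ := 2 * k * π
  have hf' : ContDiff ℝ 1 (deriv f) := (contDiff_succ_iff_deriv.1 hf).2.2
  have hcos : ∀ x, HasDerivAt (fun q => cos (c * q)) (-c * sin (c * x)) x := fun x =>
    ((hasDerivAt_id x).const_mul c).cos.congr_deriv (by simp; ring)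
  have hsin : ∀ x, HasDerivAt (fun q => -c * sin (c * q)) (-c ^ 2 * cos (c * x)) x := fun x =>
    (((hasDerivAt_id x).const_mul c).sin.const_mul (-c)).congr_deriv (by simp; ring)
  have hperiod : deriv f 1 = deriv f 0 := by
    rw [← zero_add 1, ← deriv_comp_add_const, funext hper]
  have hcos_c : cos c = 1 := by
    rw [show c = k * (2 * π) by ring]
    exact cos_nat_mul_two_pi k
  have hsin_c : sin c = 0 := by
    rw [show c = (2 * k : ℕ) * π by push_cast; ring]
    exact sin_nat_mul_pi (2 * k)
  have hint : IntervalIntegrable (fun q => deriv (deriv f) q * cos (c * q)) volume 0 1 :=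
    ((hf'.continuous_deriv le_rfl).mul (by fun_prop)).intervalIntegrable _ _
  have hint' : IntervalIntegrable (fun q => f q * (-c ^ 2 * cos (c * q))) volume 0 1 :=
    (hf.continuous.mul (by fun_prop)).intervalIntegrable _ _
  have hgreen := integral_deriv_deriv_mul_sub_mul_deriv_deriv
    (fun x _ => (hf.differentiable two_ne_zero x).hasDerivAt)
    (fun x _ => (hf'.differentiable one_ne_zero x).hasDerivAt) (fun x _ => hcos x)
    (fun x _ => hsin x) (hint.sub hint')
  rw [intervalIntegral.integral_sub hint hint'] at hgreen
  simp only [mul_one, mul_zero, hcos_c, hsin_c, cos_zero, sin_zero, hperiod, sub_self] at hgreen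
  have hpull : ∫ q in (0:ℝ)..1, f q * (-c ^ 2 * cos (c * q))
      = -c ^ 2 * ∫ q in (0:ℝ)..1, f q * cos (c * q) := by
    rw [← intervalIntegral.integral_const_mul]
    exact intervalIntegral.integral_congr fun q _ => by ring
  linear_combination hgreen + hpull

theorem integral_linear_combination_mul_eq_zero {u v w φ : ℝ → ℝ} {c₁ c₂ c₃ a b : ℝ}
    (hu : Continuous u) (hv : Continuous v) (hw : Continuous w) (hφ : Continuous φ)
    (h : ∀ x, c₁ * u x + c₂ * v x - c₃ * w x = 0) :
    c₁ * (∫ x in a..b, u x * φ x) + c₂ * (∫ x in a..b, v x * φ x)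
      - c₃ * (∫ x in a..b, w x * φ x) = 0 := by
  have hint : ∀ {f : ℝ → ℝ}, Continuous f → IntervalIntegrable (fun x => f x * φ x) volume a b :=
    fun hf => (hf.mul hφ).intervalIntegrable a b
  rw [← intervalIntegral.integral_const_mul, ← intervalIntegral.integral_const_mul,
    ← intervalIntegral.integral_const_mul,
    ← intervalIntegral.integral_add ((hint hu).const_mul _) ((hint hv).const_mul _),
    ← intervalIntegral.integral_sub (((hint hu).const_mul _).add ((hint hv).const_mul _))
      ((hint hw).const_mul _)]
  refine (intervalIntegral.integral_congr fun x _ => ?_).trans intervalIntegral.integral_zero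
  linear_combination φ x * h x

theorem derivWithin_cube_mul_derivWithin_eq {S : Set ℝ} (hS : UniqueDiffOn ℝ S)
    {a H H₁ : ℝ → ℝ} {a' H₂ γ lam μ p : ℝ} (hp : p ∈ S)
    (ha : HasDerivWithinAt a a' S p) (hH : ∀ x ∈ S, HasDerivWithinAt H (H₁ x) S x)
    (hH₁ : HasDerivWithinAt H₁ H₂ S p) (hγ : γ = -(a p * a'))
    (hode : lam ^ 2 * H₂ + (a p ^ 2)⁻¹ * (-μ * H p) - 3 * lam ^ 2 * γ * (a p ^ 2)⁻¹ * H₁ p = 0) :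
    lam ^ 2 * derivWithin (fun x => a x ^ 3 * derivWithin H S x) S p = μ * a p * H p := by
  have hflux : HasDerivWithinAt (fun x => a x ^ 3 * derivWithin H S x)
      (3 * a p ^ 2 * a' * H₁ p + a p ^ 3 * H₂) S p := by
    have hH₁' : HasDerivWithinAt (derivWithin H S) H₂ S p :=
      hH₁.congr (fun x hx => (hH x hx).derivWithin (hS x hx)) ((hH p hp).derivWithin (hS p hp))
    exact ((ha.pow 3).mul hH₁').congr_deriv
      (by rw [(hH p hp).derivWithin (hS p hp), Pi.pow_apply]; ring)
  have hcube : a p ^ 3 * (a p ^ 2)⁻¹ = a p := by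
    rcases eq_or_ne (a p) 0 with h | h
    · simp [h]
    · field_simp
  rw [hflux.derivWithin (hS p hp)]
  subst hγ
  linear_combination a p ^ 3 * hode + (μ * H p - 3 * lam ^ 2 * a' * H₁ p * a p) * hcube

theorem fourier_coefficients_satisfy_sturm_liouville_general
    (p₀ lam : ℝ) (hp₀ : p₀ < 0)
    (a : ℝ → ℝ) (ha : ContDiffOn ℝ 1 a (Icc p₀ 0))
    (γ : ℝ → ℝ) (hγ : ∀ p ∈ Icc p₀ 0, γ p = -(a p * dI p₀ a p))
    (h : ℝ → ℝ → ℝ)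
    (hsmooth : ContDiffOn ℝ 2 (fun z : ℝ × ℝ => h z.1 z.2)
      ((univ : Set ℝ) ×ˢ Icc p₀ 0))
    (hper : ∀ q p : ℝ, h (q + 1) p = h q p)
    (hpde : ∀ q : ℝ, ∀ p ∈ Icc p₀ 0,
      lam ^ 2 * dI p₀ (fun p' => dI p₀ (h q) p') p
        + (a p ^ 2)⁻¹ * deriv (fun q' => deriv (fun q'' => h q'' p) q') q
        - 3 * lam ^ 2 * γ p * (a p ^ 2)⁻¹ * dI p₀ (h q) p = 0) :
    ∀ k : ℕ,
      ContDiffOn ℝ 2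
        (fun p => ∫ q in (0:ℝ)..1, h q p * Real.cos (2 * k * π * q))
        (Icc p₀ 0) ∧
      ∀ p ∈ Icc p₀ 0,
        lam ^ 2 * dI p₀ (fun p' => a p' ^ 3 *
            dI p₀ (fun p'' => ∫ q in (0:ℝ)..1, h q p'' * Real.cos (2 * k * π * q)) p') p
          = (2 * k * π) ^ 2 * a p
              * ∫ q in (0:ℝ)..1, h q p * Real.cos (2 * k * π * q) := by
  intro k
  have hcos : Continuous fun q : ℝ => cos (2 * k * π * q) := by fun_prop
  have hh₁ : ContDiffOn ℝ 1 (uncurry fun q => dI p₀ (h q)) (univ ×ˢ Icc p₀ 0) :=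
    ContDiffOn.uncurry_derivWithin (n := 1) hsmooth (uniqueDiffOn_Icc hp₀)
  have hh₂ : ContinuousOn (uncurry fun q => dI p₀ (dI p₀ (h q))) (univ ×ˢ Icc p₀ 0) :=
    (ContDiffOn.uncurry_derivWithin (n := 0) hh₁ (uniqueDiffOn_Icc hp₀)).continuousOn
  refine ⟨contDiffOn_intervalIntegral_mul (n := 2) hp₀ hsmooth hcos, fun p hp => ?_⟩
  have hslice : ContDiff ℝ 2 fun q => h q p :=
    contDiffOn_univ.1 <| hsmooth.comp (contDiff_id.prodMk contDiff_const).contDiffOn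
      fun q _ => ⟨mem_univ q, hp⟩
  have hode : lam ^ 2 * (∫ q in (0:ℝ)..1, dI p₀ (dI p₀ (h q)) p * cos (2 * k * π * q))
      + (a p ^ 2)⁻¹ * (-(2 * k * π) ^ 2 * ∫ q in (0:ℝ)..1, h q p * cos (2 * k * π * q))
      - 3 * lam ^ 2 * γ p * (a p ^ 2)⁻¹ * (∫ q in (0:ℝ)..1, dI p₀ (h q) p * cos (2 * k * π * q))
      = 0 := by
    rw [← integral_deriv_deriv_mul_cos_of_periodic hslice (fun q => hper q p) k]
    exact integral_linear_combination_mul_eq_zero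
      (continuousOn_univ.1 (hh₂.uncurry_right p hp))
      ((contDiff_succ_iff_deriv.1 hslice).2.2.continuous_deriv le_rfl)
      (continuousOn_univ.1 (hh₁.continuousOn.uncurry_right p hp)) hcos (fun q => hpde q p hp)
  exact derivWithin_cube_mul_derivWithin_eq (uniqueDiffOn_Icc hp₀) hp
    ((ha.differentiableOn one_ne_zero p hp).hasDerivWithinAt)
    (fun x hx => hasDerivWithinAt_intervalIntegral_mul_of_contDiffOn hp₀
      (hsmooth.of_le one_le_two) hcos hx)
    (hasDerivWithinAt_intervalIntegral_mul_of_contDiffOn hp₀ hh₁ hcos hp) (hγ p hp) hode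

/-- Let h(q,p) be C² on ℝ × [p₀,0], 1-periodic in q, and satisfy the
linearized equation λ²·h_pp + a⁻²·h_qq − 3λ²·γ·a⁻²·h_p = 0 with γ = −a·a'.
Then each Fourier coefficient h_k(p) = ∫_0^1 h(q,p)·cos(2kπq) dq is C² on
[p₀,0] and satisfies λ²·(a³·h_k')' = (2kπ)²·a·h_k on [p₀,0]. -/
theorem fourier_coefficients_satisfy_sturm_liouville
    (p₀ lam : ℝ) (hp₀ : p₀ < 0) (hlam : 0 < lam)
    (a : ℝ → ℝ) (ha : ContDiffOn ℝ 1 a (Icc p₀ 0))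
    (hapos : ∀ p ∈ Icc p₀ 0, 0 < a p)
    (γ : ℝ → ℝ) (hγ : ∀ p ∈ Icc p₀ 0, γ p = -(a p * dI p₀ a p))
    (h : ℝ → ℝ → ℝ)
    (hsmooth : ContDiffOn ℝ 2 (fun z : ℝ × ℝ => h z.1 z.2)
      ((univ : Set ℝ) ×ˢ Icc p₀ 0))
    (hper : ∀ q p : ℝ, h (q + 1) p = h q p)
    (hpde : ∀ q : ℝ, ∀ p ∈ Icc p₀ 0,
      lam ^ 2 * dI p₀ (fun p' => dI p₀ (h q) p') p
        + (a p ^ 2)⁻¹ * deriv (fun q' => deriv (fun q'' => h q'' p) q') q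
        - 3 * lam ^ 2 * γ p * (a p ^ 2)⁻¹ * dI p₀ (h q) p = 0) :
    ∀ k : ℕ,
      ContDiffOn ℝ 2
        (fun p => ∫ q in (0:ℝ)..1, h q p * Real.cos (2 * k * π * q))
        (Icc p₀ 0) ∧
      ∀ p ∈ Icc p₀ 0,
        lam ^ 2 * dI p₀ (fun p' => a p' ^ 3 *
            dI p₀ (fun p'' => ∫ q in (0:ℝ)..1, h q p'' * Real.cos (2 * k * π * q)) p') p
          = (2 * k * π) ^ 2 * a p
              * ∫ q in (0:ℝ)..1, h q p * Real.cos (2 * k * π * q) :=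
  fourier_coefficients_satisfy_sturm_liouville_general p₀ lam hp₀ a ha γ hγ h hsmooth hper hpde
end
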